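/- arXiv:2207.04404 — 13 statements merged into one kernel-verified Lean document; each statement's English description precedes it below -/
import Mathlib

section
/- If q and q-1 are both prime powers, then either q is a Fermat prime (a prime of the form 2^(2^k)+1), or q-1 is a Mersenne prime (a prime of the form 2^m-1), or q = 9. -/
/-!
Of two consecutive prime powers one is even, hence a power of two, so either `r ^ b + 1 = 2 ^ a`
or `p ^ a = 2 ^ b + 1` with `p`, `r` odd primes. An even exponent makes the odd prime power a
square: an odd square plus one is `2` modulo `4`, and `(s - 1) * (s + 1) = 2 ^ b` forces `s = 3`.
An odd exponent `n` must be `1`: writing `x ^ n - 1 = (x - 1) * (1 + x + ⋯ + x ^ (n - 1))` with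
`x = p` or `x = -r`, the second factor is a positive odd divisor of a power of two.
Finally `2 ^ b + 1` prime forces `b` to be a power of two.
-/

theorem Int.odd_geom_sum_iff {x : ℤ} (hx : Odd x) (n : ℕ) :
    Odd (∑ i ∈ Finset.range n, x ^ i) ↔ Odd n := by
  induction n with
  | zero => simp
  | succ n ih =>
    rw [Finset.sum_range_succ, Int.odd_add, ih, Nat.odd_add_one, ← Int.not_odd_iff_even]
    simp [hx.pow]

theorem Int.pow_eq_self_of_pow_sub_one_dvd_two_pow {x : ℤ} (hx : Odd x) {n k : ℕ} (hn : Odd n)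
    (h : x ^ n - 1 ∣ 2 ^ k) : x ^ n = x := by
  set S := ∑ i ∈ Finset.range n, x ^ i
  have hS : S * (x - 1) = x ^ n - 1 := geom_sum_mul x n
  have hS_dvd : S.natAbs ∣ 2 ^ k := by
    simpa [Int.natAbs_pow] using Int.natAbs_dvd_natAbs.mpr ((Dvd.intro _ hS).trans h)
  have hS_odd : Odd S.natAbs := Int.natAbs_odd.mpr ((odd_geom_sum_iff hx n).mpr hn)
  have hS_one : S = 1 := by
    have := (hS_odd.coprime_two_right.pow_right k).eq_one_of_dvd hS_dvd
    have hS_pos : 0 < S := hn.geom_sum_pos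
    omega
  rw [hS_one, one_mul] at hS
  linarith

namespace Nat

theorem eq_one_of_sq_add_one_eq_two_pow {s a : ℕ} (hs : Odd s) (h : s ^ 2 + 1 = 2 ^ a) :
    s = 1 := by
  obtain ⟨t, rfl⟩ := hs
  have h4 : (2 * t + 1) ^ 2 + 1 = 4 * (t * t + t) + 2 := by ring
  rw [h4] at h
  rcases a with _ | _ | a <;> simp only [pow_succ, pow_zero] at h <;> omega

theorem eq_one_of_two_pow_eq_two_pow_add_two {d e : ℕ} (h : 2 ^ d = 2 ^ e + 2) : e = 1 := by
  rcases e with _ | _ | e <;> rcases d with _ | _ | d <;> simp [pow_succ] at h ⊢ <;> omega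

theorem eq_three_of_sq_eq_two_pow_add_one {s b : ℕ} (h : s ^ 2 = 2 ^ b + 1) : s = 3 := by
  have hs : 1 ≤ s := by
    by_contra! hs
    simp_all
  have hfac : (s - 1) * (s + 1) = 2 ^ b := by
    zify [hs] at h ⊢
    linear_combination h
  obtain ⟨e, -, he⟩ := (dvd_prime_pow prime_two).mp (Dvd.intro _ hfac)
  obtain ⟨d, -, hd⟩ := (dvd_prime_pow prime_two).mp (Dvd.intro_left _ hfac)
  have he1 : e = 1 := eq_one_of_two_pow_eq_two_pow_add_two (d := d) (by omega)
  subst he1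
  omega

theorem eq_one_of_pow_add_one_eq_two_pow {r a b : ℕ} (hr : Odd r) (hr1 : 1 < r) (hb : b ≠ 0)
    (h : r ^ b + 1 = 2 ^ a) : b = 1 := by
  rcases even_or_odd b with ⟨c, rfl⟩ | hb_odd
  · have hrc : r ^ c = 1 :=
      eq_one_of_sq_add_one_eq_two_pow hr.pow (by rwa [← pow_mul, mul_two])
    rw [Nat.pow_eq_one] at hrc
    omega
  · have h_int : (r : ℤ) ^ b + 1 = 2 ^ a := by exact_mod_cast h
    have hdvd : (-(r : ℤ)) ^ b - 1 ∣ 2 ^ a :=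
      ⟨-1, by rw [hb_odd.neg_pow]; linear_combination -h_int⟩
    have hrb := Int.pow_eq_self_of_pow_sub_one_dvd_two_pow (by simpa using hr) hb_odd hdvd
    rw [hb_odd.neg_pow, neg_inj] at hrb
    exact (pow_eq_self_iff hr1).mp (by exact_mod_cast hrb)

theorem eq_one_or_pow_eq_nine_of_pow_eq_two_pow_add_one {p a b : ℕ} (hp : 1 < p) (hb : b ≠ 0)
    (h : p ^ a = 2 ^ b + 1) : a = 1 ∨ p ^ a = 9 := by
  rcases even_or_odd a with ⟨c, rfl⟩ | ha_odd
  · have hpc : p ^ c = 3 := eq_three_of_sq_eq_two_pow_add_one (by rwa [← pow_mul, mul_two])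
    right
    rw [← two_mul, pow_mul', hpc]
    rfl
  · left
    have hq_odd : Odd (p ^ a) := h ▸ (even_pow.mpr ⟨even_two, hb⟩).add_one
    have hp_odd : Odd p := (odd_pow_iff (by rintro rfl; simp at ha_odd)).mp hq_odd
    have h_int : (p : ℤ) ^ a = 2 ^ b + 1 := by exact_mod_cast h
    have hdvd : (p : ℤ) ^ a - 1 ∣ 2 ^ b := ⟨1, by linear_combination -h_int⟩
    have hpa := Int.pow_eq_self_of_pow_sub_one_dvd_two_pow (by exact_mod_cast hp_odd) ha_odd hdvd
    exact (pow_eq_self_iff hp).mp (by exact_mod_cast hpa)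

end Nat

theorem stmt_0_general (q : ℕ) (hq : IsPrimePow q) (hq1 : IsPrimePow (q - 1)) :
    (Nat.Prime q ∧ ∃ k : ℕ, q = 2 ^ (2 ^ k) + 1) ∨
    (Nat.Prime (q - 1) ∧ ∃ m : ℕ, q - 1 = 2 ^ m - 1) ∨ q = 9 := by
  obtain ⟨p, a, hp, -, hpa⟩ := (isPrimePow_nat_iff q).mp hq
  obtain ⟨r, b, hr, hb, hrb⟩ := (isPrimePow_nat_iff _).mp hq1
  have hq_pos : 1 ≤ q := hpa ▸ Nat.one_le_pow _ _ hp.pos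
  rcases hr.eq_two_or_odd' with rfl | hr_odd
  · have h : p ^ a = 2 ^ b + 1 := by omega
    rcases Nat.eq_one_or_pow_eq_nine_of_pow_eq_two_pow_add_one hp.one_lt hb.ne' h with rfl | h9
    · rw [pow_one] at h hpa
      subst hpa
      obtain ⟨k, rfl⟩ := Nat.pow_of_pow_add_prime one_lt_two hb.ne' (h ▸ hp)
      exact Or.inl ⟨hp, k, h⟩
    · exact Or.inr (Or.inr (hpa ▸ h9))
  · have h : r ^ b + 1 = p ^ a := by omega
    obtain rfl : p = 2 := hp.even_iff.mp (Nat.even_pow.mp (h ▸ hr_odd.pow.add_one)).1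
    obtain rfl : b = 1 := Nat.eq_one_of_pow_add_one_eq_two_pow hr_odd hr.one_lt hb.ne' h
    rw [pow_one] at hrb
    exact Or.inr (Or.inl ⟨hrb ▸ hr, a, by omega⟩)

/-- If `q` and `q-1` are both prime powers, then either `q` is a Fermat prime,
or `q-1` is a Mersenne prime, or `q = 9`. -/
theorem stmt_0 (q : ℕ) (hq2 : 2 ≤ q) (hq : IsPrimePow q) (hq1 : IsPrimePow (q - 1)) :
    (Nat.Prime q ∧ ∃ k : ℕ, q = 2 ^ (2 ^ k) + 1) ∨
    (Nat.Prime (q - 1) ∧ ∃ m : ℕ, q - 1 = 2 ^ m - 1) ∨ q = 9 :=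
  stmt_0_general q hq hq1
end

section
/- Let q > 2 be such that both q and q-1 are prime powers, and let n > 1 be an integer. Then q^n - 1 has a prime factor coprime to q - 1, unless q = 3 and n = 2. -/
/-!
Write `q - 1 = r ^ k` with `r` prime. If every prime factor of `q ^ n - 1` divides `q - 1`,
then `q ^ n - 1` is a power of `r`. For odd `r`, lifting the exponent gives
`q ^ n - 1 = (q - 1) * r ^ vᵣ(n) ≤ (q - 1) * n`, which is too small. For `r = 2` and odd
`n`, the quotient `1 + q + ⋯ + q ^ (n - 1)` is odd and larger than `1`, yet a power of `2`.
For `r = 2` and `n = 2 * m`, the factors `q ^ m - 1` and `q ^ m + 1` are powers of `2`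
differing by `2`, so `q ^ m = 3`.
-/

open Finset

namespace Nat

theorem exists_eq_pow_of_forall_prime_dvd_pow {m r k : ℕ} (hr : r.Prime) (hm : m ≠ 0)
    (h : ∀ p, p.Prime → p ∣ m → p ∣ r ^ k) : ∃ v, m = r ^ v :=
  ⟨_, eq_prime_pow_of_unique_prime_dvd hm fun hp hpm =>
    (prime_dvd_prime_iff_eq hp hr).mp (hp.dvd_of_dvd_pow (h _ hp hpm))⟩

theorem geom_sum_modEq {q r : ℕ} (h : q ≡ 1 [MOD r]) (n : ℕ) :
    ∑ i ∈ range n, q ^ i ≡ n [MOD r] :=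
  calc ∑ i ∈ range n, q ^ i ≡ ∑ _i ∈ range n, 1 [MOD r] :=
        ModEq.sum fun i _ => by simpa using h.pow i
    _ = n := by simp

theorem lt_geom_sum {q n : ℕ} (hq : 2 ≤ q) (hn : 2 ≤ n) : n < ∑ i ∈ range n, q ^ i :=
  calc n = ∑ _i ∈ range n, 1 := by simp
    _ < ∑ i ∈ range n, q ^ i :=
      sum_lt_sum (fun i _ => one_le_pow _ _ (by omega)) ⟨1, by simp; omega, by simp; omega⟩

theorem sub_one_mul_lt_pow_sub_one {q n : ℕ} (hq : 2 ≤ q) (hn : 2 ≤ n) :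
    (q - 1) * n < q ^ n - 1 := by
  rw [← geom_sum_mul_of_one_le (by omega : 1 ≤ q), mul_comm]
  exact (Nat.mul_lt_mul_right (by omega)).mpr (lt_geom_sum hq hn)

theorem two_pow_add_two_eq_two_pow {i j : ℕ} (h : 2 ^ i + 2 = 2 ^ j) : i = 1 := by
  have hi := Nat.two_pow_pos i
  rcases i with _ | _ | i <;> rcases j with _ | _ | j <;> simp only [pow_succ, pow_zero] at h hi <;>
    omega

theorem eq_three_of_pow_sub_one_eq_two_pow {q n v : ℕ} (hq : 2 ≤ q) (hn : Even n) (hn0 : n ≠ 0)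
    (h : q ^ n - 1 = 2 ^ v) : q = 3 ∧ n = 2 := by
  obtain ⟨m, rfl⟩ := hn
  have hqm : q ≤ q ^ m := le_self_pow (by omega) q
  have hfac : (q ^ m + 1) * (q ^ m - 1) = 2 ^ v := by
    rw [← sq_sub_sq, ← pow_mul, ← h, one_pow, mul_two]
  obtain ⟨j, -, hj⟩ := (dvd_prime_pow prime_two).mp (Dvd.intro _ hfac)
  obtain ⟨i, -, hi⟩ := (dvd_prime_pow prime_two).mp (Dvd.intro_left _ hfac)
  have hqm3 : q ^ m = 3 := by
    obtain rfl : i = 1 := two_pow_add_two_eq_two_pow (j := j) (by omega)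
    omega
  obtain rfl : m = 1 := by
    by_contra hm
    have : q ^ 2 ≤ q ^ m := Nat.pow_le_pow_right (by omega) (by omega)
    nlinarith
  exact ⟨by simpa using hqm3, rfl⟩

theorem pow_sub_one_ne_prime_pow_of_not_dvd {q n r v : ℕ} (hr : r.Prime) (hq : 2 ≤ q)
    (hn : 2 ≤ n) (hrq : r ∣ q - 1) (hrn : ¬r ∣ n) : q ^ n - 1 ≠ r ^ v := by
  intro h
  set S := ∑ i ∈ range n, q ^ i
  have hS : S * (q - 1) = r ^ v := by rw [geom_sum_mul_of_one_le (by omega), h]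
  obtain ⟨j, -, hj⟩ := (dvd_prime_pow hr).mp (Dvd.intro _ hS)
  have hSn : S ≡ n [MOD r] := geom_sum_modEq ((modEq_iff_dvd' (by omega)).mpr hrq).symm n
  obtain rfl : j = 0 := by
    by_contra hj0
    exact hrn ((hSn.dvd_iff dvd_rfl).mp (hj ▸ dvd_pow_self r hj0))
  have := lt_geom_sum hq hn
  rw [pow_zero] at hj
  omega

theorem pow_sub_one_ne_odd_prime_pow {q n r k v : ℕ} (hr : r.Prime) (hr_odd : Odd r)
    (hn : 2 ≤ n) (hk : 0 < k) (hqk : q - 1 = r ^ k) : q ^ n - 1 ≠ r ^ v := by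
  intro h
  have := Fact.mk hr
  have hr2 := hr.two_le
  have hrk : r ≤ r ^ k := le_self_pow hk.ne' r
  have hrq : r ∣ q - 1 := hqk ▸ dvd_pow_self r hk.ne'
  have hrq' : ¬r ∣ q := fun hrq' => hr.ne_one <| dvd_one.mp <| by
    simpa [Nat.sub_sub_self (by omega : 1 ≤ q)] using Nat.dvd_sub hrq' hrq
  have hlte := padicValNat.pow_sub_pow (y := 1) hr_odd (by omega) hrq hrq' (n := n) (by omega)
  rw [one_pow, h, hqk, padicValNat.prime_pow, padicValNat.prime_pow] at hlte
  have hrn : r ^ padicValNat r n ≤ n := le_of_dvd (by omega) pow_padicValNat_dvd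
  refine lt_irrefl (q ^ n - 1) ?_
  calc q ^ n - 1 = r ^ k * r ^ padicValNat r n := by rw [h, hlte, pow_add]
    _ ≤ (q - 1) * n := by rw [hqk]; exact Nat.mul_le_mul_left _ hrn
    _ < q ^ n - 1 := sub_one_mul_lt_pow_sub_one (by omega) hn

end Nat

theorem stmt_1_general (q n : ℕ) (hq2 : 2 < q) (hq1 : IsPrimePow (q - 1))
    (hn : 1 < n) (hex : ¬(q = 3 ∧ n = 2)) :
    ∃ p : ℕ, p.Prime ∧ p ∣ q ^ n - 1 ∧ ¬ p ∣ q - 1 := by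
  by_contra! hcon
  obtain ⟨r, k, hr, hk, hqk⟩ := (isPrimePow_nat_iff _).mp hq1
  obtain ⟨v, hv⟩ := Nat.exists_eq_pow_of_forall_prime_dvd_pow hr
    (Nat.sub_ne_zero_of_lt (Nat.one_lt_pow (by omega) (by omega))) (hqk ▸ hcon)
  rcases hr.eq_two_or_odd' with rfl | hr_odd
  · rcases n.even_or_odd with hn_even | hn_odd
    · exact hex (Nat.eq_three_of_pow_sub_one_eq_two_pow (by omega) hn_even (by omega) hv)
    · exact Nat.pow_sub_one_ne_prime_pow_of_not_dvd Nat.prime_two (by omega) hn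
        (hqk ▸ dvd_pow_self 2 hk.ne') hn_odd.not_two_dvd_nat hv
  · exact Nat.pow_sub_one_ne_odd_prime_pow hr hr_odd hn hk hqk.symm hv

/-- If `q > 2` and `q, q-1` are both prime powers, and `n > 1`, then `q^n - 1` has a
prime factor coprime to `q - 1`, unless `q = 3` and `n = 2`. -/
theorem stmt_1 (q n : ℕ) (hq2 : 2 < q) (hq : IsPrimePow q) (hq1 : IsPrimePow (q - 1))
    (hn : 1 < n) (hex : ¬(q = 3 ∧ n = 2)) :
    ∃ p : ℕ, p.Prime ∧ p ∣ q ^ n - 1 ∧ ¬ p ∣ q - 1 :=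
  stmt_1_general q n hq2 hq1 hn hex
end

section
/- Suppose the characteristic polynomial of C in GL_n(F_q) is irreducible, the multiplicative order of C is k, t divides k, and k/t divides q^m - 1. Then the minimal polynomial of C^t is irreducible of degree at most m. -/
/-!
The minimal polynomial of `C` divides its irreducible characteristic polynomial, so it is
irreducible and `F[C] ≅ F[X]/(minpoly C)` is a field. Hence every element of `F[C]`, in particular
`C ^ t`, has an irreducible minimal polynomial. Since `C ^ t` has order dividing `k / t`, which
divides `q ^ m - 1`, it is a root of `X ^ (q ^ m) - X`; an irreducible factor of that polynomial
over `F_q` has degree dividing `m`.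
-/

open Polynomial

theorem Matrix.irreducible_minpoly_of_irreducible_charpoly {K n : Type*} [Field K] [Fintype n]
    [DecidableEq n] {M : Matrix n n K} (hM : Irreducible M.charpoly) :
    Irreducible (minpoly K M) := by
  have : Nonempty n := by
    rw [← Fintype.card_pos_iff, ← M.charpoly_natDegree_eq_dim]
    exact hM.natDegree_pos
  exact ((hM.dvd_iff.mp M.minpoly_dvd_charpoly).resolve_left
    (minpoly.not_isUnit K M)).irreducible hM

theorem irreducible_minpoly_of_mem_adjoin {F A : Type*} [Field F] [Ring A] [Algebra F A]
    {x y : A} (hx : Irreducible (minpoly F x)) (hy : y ∈ Algebra.adjoin F {x}) :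
    Irreducible (minpoly F y) := by
  have : Fact (Irreducible (minpoly F x)) := ⟨hx⟩
  have : Nontrivial A := by
    by_contra h
    rw [not_nontrivial_iff_subsingleton] at h
    exact hx.not_isUnit (isUnit_of_dvd_one (minpoly.dvd F x (Subsingleton.elim _ _)))
  have := (AdjoinRoot.powerBasis hx.ne_zero).finite
  let φ : AdjoinRoot (minpoly F x) →ₐ[F] A :=
    Ideal.Quotient.liftₐ _ (aeval x) fun p hp => by
      obtain ⟨q, rfl⟩ := Ideal.mem_span_singleton.mp hp
      rw [map_mul, minpoly.aeval, zero_mul]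
  rw [Algebra.adjoin_singleton_eq_range_aeval] at hy
  obtain ⟨p, rfl⟩ := hy
  rw [show (aeval x).toRingHom p = φ (AdjoinRoot.mk _ p) from rfl,
    minpoly.algHom_eq φ φ.toRingHom.injective]
  exact minpoly.irreducible (.of_finite F _)

theorem natDegree_minpoly_dvd_of_pow_card_pow_eq_self {F A : Type*} [Field F] [Ring A]
    [Algebra F A] {y : A} (hy : Irreducible (minpoly F y)) {m : ℕ}
    (h : y ^ Nat.card F ^ m = y) : (minpoly F y).natDegree ∣ m :=
  hy.natDegree_dvd_of_dvd_X_pow_card_pow_sub_X <| minpoly.dvd F y <| by simp [h]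

theorem pow_eq_self_of_pow_eq_one_of_dvd_sub_one {M : Type*} [Monoid M] {y : M} {e N : ℕ}
    (hy : y ^ e = 1) (hN : 0 < N) (h : e ∣ N - 1) : y ^ N = y := by
  obtain ⟨c, hc⟩ := h
  calc y ^ N = y ^ (N - 1) * y := by rw [← pow_succ, Nat.sub_add_cancel hN]
    _ = y := by rw [hc, pow_mul, hy, one_pow, one_mul]

theorem stmt_4_general (F : Type*) [Field F] [Fintype F] (n : ℕ)
    (C : Matrix (Fin n) (Fin n) F) (hirr : Irreducible C.charpoly)
    (k t m : ℕ) (hk : orderOf C = k) (htk : t ∣ k) (hm : 0 < m)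
    (hdvd : k / t ∣ Fintype.card F ^ m - 1) :
    Irreducible (minpoly F (C ^ t)) ∧ (minpoly F (C ^ t)).natDegree ≤ m := by
  have hirr_pow : Irreducible (minpoly F (C ^ t)) :=
    irreducible_minpoly_of_mem_adjoin (Matrix.irreducible_minpoly_of_irreducible_charpoly hirr)
      (Subalgebra.pow_mem _ (Algebra.self_mem_adjoin_singleton F C) t)
  have horder : (C ^ t) ^ (k / t) = 1 := by
    rw [← pow_mul, Nat.mul_div_cancel' htk, ← hk, pow_orderOf_eq_one]
  have hfix : (C ^ t) ^ Nat.card F ^ m = C ^ t := by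
    rw [← Fintype.card_eq_nat_card]
    exact pow_eq_self_of_pow_eq_one_of_dvd_sub_one horder (pow_pos Fintype.card_pos m) hdvd
  exact ⟨hirr_pow,
    Nat.le_of_dvd hm (natDegree_minpoly_dvd_of_pow_card_pow_eq_self hirr_pow hfix)⟩

/-- If `C ∈ GL_n(F_q)` has irreducible characteristic polynomial, multiplicative order `k`,
`t ∣ k`, and `k/t ∣ q^m - 1`, then the minimal polynomial of `C^t` is irreducible of degree
at most `m`. -/
theorem stmt_4 (F : Type*) [Field F] [Fintype F] [DecidableEq F] (n : ℕ)
    (C : Matrix (Fin n) (Fin n) F) (hC : IsUnit C) (hirr : Irreducible C.charpoly)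
    (k t m : ℕ) (hk : orderOf C = k) (ht : 0 < t) (htk : t ∣ k) (hm : 0 < m)
    (hdvd : k / t ∣ Fintype.card F ^ m - 1) :
    Irreducible (minpoly F (C ^ t)) ∧ (minpoly F (C ^ t)).natDegree ≤ m :=
  stmt_4_general F n C hirr k t m hk htk hm hdvd
end

section
/- Suppose the characteristic polynomial of a matrix C in GL_n(F_q) is irreducible and the multiplicative order of C is k. For a divisor t of k, the quotient k/t divides q - 1 if and only if C^t is a scalar multiple of the identity matrix. -/
/-!
`C ^ t` has order `k / t`, so `k / t ∣ q - 1` says exactly that `(C ^ t) ^ (q - 1) = 1`.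
Since the characteristic polynomial `p` of `C` is irreducible, `F[C]` is the image of the field
`F[X] ⧸ (p)`, and in a field extension of `F_q` the solutions of `x ^ q = x` are the elements
of `F_q` (the `q` roots of `X ^ q - X`); so `C ^ t` satisfies this equation iff it is a scalar.
-/

open Matrix Polynomial

theorem FiniteField.exists_algebraMap_eq_of_pow_card_eq {F L : Type*} [Field F] [Fintype F]
    [Field L] [Algebra F L] {x : L} (hx : x ^ Fintype.card F = x) :
    ∃ z : F, algebraMap F L z = x := by
  set P : F[X] := X ^ Fintype.card F - X
  have hP : P ≠ 0 := X_pow_card_sub_X_ne_zero F Fintype.one_lt_card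
  have hroots : P.roots.map (algebraMap F L) = (P.map (algebraMap F L)).roots :=
    roots_map_of_injective_of_card_eq_natDegree (algebraMap F L).injective (by
      rw [roots_X_pow_card_sub_X, X_pow_card_sub_X_natDegree_eq F Fintype.one_lt_card]
      rfl)
  have hxP : x ∈ (P.map (algebraMap F L)).roots := by
    rw [mem_roots (Polynomial.map_ne_zero hP)]
    simp [P, hx]
  rw [← hroots, roots_X_pow_card_sub_X, Multiset.mem_map] at hxP
  obtain ⟨z, -, hz⟩ := hxP
  exact ⟨z, hz⟩

theorem Matrix.nonempty_of_irreducible_charpoly {n R : Type*} [Fintype n] [DecidableEq n]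
    [CommRing R] {C : Matrix n n R} (h : Irreducible C.charpoly) : Nonempty n := by
  by_contra hn
  rw [not_nonempty_iff] at hn
  exact h.not_isUnit (by rw [charpoly_isEmpty]; exact isUnit_one)

section Adjoin

variable {F A : Type*} [Field F] [Fintype F] [Ring A] [Nontrivial A] [Algebra F A]
  {p : F[X]} {a x : A}

theorem exists_eq_algebraMap_of_mem_adjoin_of_pow_card_eq (hp : Irreducible p)
    (hpa : aeval a p = 0) (hx : x ∈ Algebra.adjoin F {a}) (hxq : x ^ Fintype.card F = x) :
    ∃ z : F, x = algebraMap F A z := by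
  have := PrincipalIdealRing.isMaximal_of_irreducible hp
  let := Ideal.Quotient.field (Ideal.span {p})
  let φ : F[X] ⧸ Ideal.span {p} →ₐ[F] A := Ideal.Quotient.liftₐ _ (aeval a) fun g hg => by
    obtain ⟨h, rfl⟩ := Ideal.mem_span_singleton'.mp hg
    rw [map_mul, hpa, mul_zero]
  obtain ⟨g, rfl⟩ : ∃ g : F[X], aeval a g = x := by
    rwa [Algebra.adjoin_singleton_eq_range_aeval] at hx
  have hφ : φ (Ideal.Quotient.mk _ g) = aeval a g := Ideal.Quotient.liftₐ_apply ..
  have hφinj : Function.Injective φ := φ.toRingHom.injective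
  obtain ⟨z, hz⟩ := FiniteField.exists_algebraMap_eq_of_pow_card_eq (F := F)
    (x := Ideal.Quotient.mk _ g) (hφinj (by rw [map_pow, hφ, hxq]))
  exact ⟨z, by rw [← hφ, ← hz, AlgHom.commutes]⟩

theorem pow_card_sub_one_eq_one_iff_of_mem_adjoin (hp : Irreducible p) (hpa : aeval a p = 0)
    (hxu : IsUnit x) (hx : x ∈ Algebra.adjoin F {a}) :
    x ^ (Fintype.card F - 1) = 1 ↔ ∃ z : F, x = algebraMap F A z := by
  constructor
  · intro hx1
    refine exists_eq_algebraMap_of_mem_adjoin_of_pow_card_eq hp hpa hx ?_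
    rw [← Nat.sub_add_cancel Fintype.card_pos, pow_succ, hx1, one_mul]
  · rintro ⟨z, rfl⟩
    have hz : z ≠ 0 := by
      rintro rfl
      exact not_isUnit_zero (by rwa [map_zero] at hxu)
    rw [← map_pow, FiniteField.pow_card_sub_one_eq_one z hz, map_one]

end Adjoin

theorem stmt_5_general (F : Type*) [Field F] [Fintype F] (n : ℕ)
    (C : Matrix (Fin n) (Fin n) F) (hC : IsUnit C) (hirr : Irreducible C.charpoly)
    (k t : ℕ) (hk : orderOf C = k) (htk : t ∣ k) :
    k / t ∣ Fintype.card F - 1 ↔ ∃ z : F, C ^ t = z • (1 : Matrix (Fin n) (Fin n) F) := by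
  have : Nonempty (Fin n) := C.nonempty_of_irreducible_charpoly hirr
  subst hk
  have ht : t ≠ 0 := ne_zero_of_dvd_ne_zero hC.isOfFinOrder.orderOf_pos.ne' htk
  have hord : orderOf (C ^ t) = orderOf C / t := by rw [orderOf_pow' C ht, Nat.gcd_eq_right htk]
  have hCt : C ^ t ∈ Algebra.adjoin F {C} :=
    Subalgebra.pow_mem _ (Algebra.self_mem_adjoin_singleton F C) t
  rw [← hord, orderOf_dvd_iff_pow_eq_one,
    pow_card_sub_one_eq_one_iff_of_mem_adjoin hirr (aeval_self_charpoly C) (hC.pow t) hCt]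
  simp_rw [Algebra.algebraMap_eq_smul_one]

/-- If `C ∈ GL_n(F_q)` has irreducible characteristic polynomial and multiplicative order `k`,
and `t ∣ k`, then `k/t ∣ q - 1` iff `C^t` is a scalar multiple of the identity. -/
theorem stmt_5 (F : Type*) [Field F] [Fintype F] [DecidableEq F] (n : ℕ)
    (C : Matrix (Fin n) (Fin n) F) (hC : IsUnit C) (hirr : Irreducible C.charpoly)
    (k t : ℕ) (hk : orderOf C = k) (ht : 0 < t) (htk : t ∣ k) :
    k / t ∣ Fintype.card F - 1 ↔ ∃ z : F, C ^ t = z • (1 : Matrix (Fin n) (Fin n) F) :=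
  stmt_5_general F n C hC hirr k t hk htk
end

section
/- Suppose C is an n×n matrix over F_q with n > 1 whose characteristic polynomial is irreducible, and suppose C^{p_1} is a scalar multiple of the identity for a prime p_1. Then n is the smallest positive integer m such that p_1(q-1) divides q^m - 1. -/
/-!
Adjoining a root `α` of the characteristic polynomial gives the field `F_{q^n}`, and
`C^{p₁} = z • 1` becomes `α^{p₁} = z ∈ F^×`, so `ord α ∣ p₁(q-1)`. Since `α` generates `F_{q^n}`,
the `m`-th power of Frobenius fixes `α` iff it is the identity, i.e. `ord α ∣ q^m - 1 ↔ n ∣ m`.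
As `n > 1`, `ord α ∤ q - 1`; primality of `p₁` then forces
`p₁(q-1) ∣ lcm(ord α, q-1) ∣ q^n - 1`, and `p₁(q-1) ∣ q^m - 1` gives `ord α ∣ q^m - 1`,
i.e. `n ∣ m`.
-/

open Matrix

theorem orderOf_dvd_sub_one_iff_pow_eq_self {M₀ : Type*} [MonoidWithZero M₀]
    [IsRightCancelMulZero M₀] {x : M₀} (hx : x ≠ 0) {k : ℕ} (hk : k ≠ 0) :
    orderOf x ∣ k - 1 ↔ x ^ k = x := by
  conv_rhs => rw [← Nat.sub_add_cancel (Nat.one_le_iff_ne_zero.2 hk), pow_succ]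
  rw [orderOf_dvd_iff_pow_eq_one, mul_eq_right₀ hx]

theorem Nat.Prime.mul_dvd_of_dvd_mul_of_not_dvd {p t a b : ℕ} (hp : p.Prime) (htpa : t ∣ p * a)
    (hta : ¬ t ∣ a) (htb : t ∣ b) (hab : a ∣ b) : p * a ∣ b := by
  obtain ⟨c, hc⟩ := Nat.dvd_lcm_right t a
  have ha : a ≠ 0 := by rintro rfl; exact hta (dvd_zero t)
  have hcp : c ∣ p := by
    rw [← Nat.mul_dvd_mul_iff_left (Nat.pos_of_ne_zero ha), ← hc, mul_comm]
    exact Nat.lcm_dvd htpa (dvd_mul_left a p)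
  rcases hp.eq_one_or_self_of_dvd c hcp with rfl | rfl
  · rw [mul_one] at hc
    exact absurd (hc ▸ Nat.dvd_lcm_left t a) hta
  · exact mul_comm a c ▸ hc ▸ Nat.lcm_dvd htb hab

theorem Matrix.charpoly_eq_minpoly_of_irreducible {K n : Type*} [Field K] [Fintype n]
    [DecidableEq n] {C : Matrix n n K} (hirr : Irreducible C.charpoly) :
    C.charpoly = minpoly K C := by
  cases isEmpty_or_nonempty n
  · exact absurd (charpoly_isEmpty (A := C) ▸ isUnit_one) hirr.not_isUnit
  exact minpoly.eq_of_irreducible_of_monic hirr (aeval_self_charpoly C) (charpoly_monic C)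

theorem AdjoinRoot.root_ne_zero {K : Type*} [Field K] {f : Polynomial K}
    (hf : 1 < f.natDegree) : root f ≠ 0 := fun h ↦ by
  rw [← mk_X, mk_eq_zero] at h
  have := Polynomial.natDegree_le_of_dvd h Polynomial.X_ne_zero
  rw [Polynomial.natDegree_X] at this
  omega

theorem Matrix.aeval_root_charpoly_eq_zero {K n : Type*} [Field K] [Fintype n] [DecidableEq n]
    {C : Matrix n n K} (hirr : Irreducible C.charpoly) {g : Polynomial K}
    (hg : Polynomial.aeval C g = 0) : Polynomial.aeval (AdjoinRoot.root C.charpoly) g = 0 := by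
  rw [AdjoinRoot.aeval_eq, AdjoinRoot.mk_eq_zero, charpoly_eq_minpoly_of_irreducible hirr]
  exact minpoly.dvd K C hg

namespace FiniteField

variable {F L : Type*} [Field F] [Fintype F] [Field L] [Algebra F L]

theorem finrank_dvd_iff_orderOf_dvd [Finite L] {α : L} (hα0 : α ≠ 0)
    (hα : Algebra.adjoin F {α} = ⊤) (m : ℕ) :
    Module.finrank F L ∣ m ↔ orderOf α ∣ Fintype.card F ^ m - 1 := by
  have hfrob : (frobeniusAlgHom F L ^ m) α = α ^ Fintype.card F ^ m := by
    rw [AlgHom.coe_pow, coe_frobeniusAlgHom, pow_iterate]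
  rw [orderOf_dvd_sub_one_iff_pow_eq_self hα0 (pow_ne_zero m Fintype.card_ne_zero),
    ← orderOf_frobeniusAlgHom, orderOf_dvd_iff_pow_eq_one, ← hfrob]
  refine ⟨fun h ↦ by rw [h, AlgHom.one_apply], fun h ↦ ?_⟩
  exact AlgHom.ext_of_adjoin_eq_top hα (Set.singleton_subset_iff.2 h)

theorem orderOf_dvd_mul_card_sub_one {α : L} (hα : α ≠ 0) {p : ℕ} (hp : p ≠ 0) {z : F}
    (h : α ^ p = algebraMap F L z) : orderOf α ∣ p * (Fintype.card F - 1) := by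
  have hz : z ≠ 0 := by
    rintro rfl
    exact hα (pow_eq_zero_iff hp |>.1 (h.trans (map_zero _)))
  refine orderOf_dvd_of_pow_eq_one ?_
  rw [pow_mul, h, ← map_pow, pow_card_sub_one_eq_one z hz, map_one]

end FiniteField

theorem stmt_6_general (F : Type*) [Field F] [Fintype F] (n : ℕ) (hn : 1 < n)
    (C : Matrix (Fin n) (Fin n) F) (hirr : Irreducible C.charpoly)
    (p₁ : ℕ) (hp₁ : p₁.Prime) (hscalar : ∃ z : F, C ^ p₁ = z • (1 : Matrix (Fin n) (Fin n) F)) :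
    IsLeast {m : ℕ | 0 < m ∧ p₁ * (Fintype.card F - 1) ∣ Fintype.card F ^ m - 1} n := by
  obtain ⟨z, hz⟩ := hscalar
  have : Fact (Irreducible C.charpoly) := ⟨hirr⟩
  have hf : C.charpoly ≠ 0 := (charpoly_monic C).ne_zero
  have : Module.Finite F (AdjoinRoot C.charpoly) := (AdjoinRoot.powerBasis hf).finite
  have : Finite (AdjoinRoot C.charpoly) := Module.finite_of_finite F
  have hdeg : C.charpoly.natDegree = n := by rw [charpoly_natDegree_eq_dim, Fintype.card_fin]
  have hrank : Module.finrank F (AdjoinRoot C.charpoly) = n := by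
    rw [(AdjoinRoot.powerBasis hf).finrank, AdjoinRoot.powerBasis_dim, hdeg]
  have hα0 := AdjoinRoot.root_ne_zero (hdeg ▸ hn)
  set α := AdjoinRoot.root C.charpoly
  have hdvd_iff (m : ℕ) : n ∣ m ↔ orderOf α ∣ Fintype.card F ^ m - 1 := by
    rw [← FiniteField.finrank_dvd_iff_orderOf_dvd hα0 AdjoinRoot.adjoinRoot_eq_top, hrank]
  have hpow : α ^ p₁ = algebraMap F _ z := by
    have := aeval_root_charpoly_eq_zero hirr (g := Polynomial.X ^ p₁ - Polynomial.C z)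
      (by simp [hz, Algebra.algebraMap_eq_smul_one])
    simpa [sub_eq_zero] using this
  have hord := FiniteField.orderOf_dvd_mul_card_sub_one hα0 hp₁.ne_zero hpow
  have hord_not : ¬ orderOf α ∣ Fintype.card F - 1 := fun h ↦
    absurd (Nat.le_of_dvd one_pos ((hdvd_iff 1).2 (by rwa [pow_one]))) (by omega)
  have hq : Fintype.card F - 1 ∣ Fintype.card F ^ n - 1 := by
    simpa using Nat.sub_dvd_pow_sub_pow (Fintype.card F) 1 n
  refine ⟨⟨by omega, hp₁.mul_dvd_of_dvd_mul_of_not_dvd hord hord_not ((hdvd_iff n).1 dvd_rfl) hq⟩,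
    ?_⟩
  rintro m ⟨hm, hdvd⟩
  exact Nat.le_of_dvd hm ((hdvd_iff m).2 (hord.trans hdvd))

/-- If `C` is an `n × n` matrix over `F_q`, `n > 1`, with irreducible characteristic
polynomial, and `C^{p₁}` is a scalar multiple of the identity for a prime `p₁`, then
`n` is the smallest positive integer `m` such that `p₁(q-1)` divides `q^m - 1`. -/
theorem stmt_6 (F : Type*) [Field F] [Fintype F] [DecidableEq F] (n : ℕ) (hn : 1 < n)
    (C : Matrix (Fin n) (Fin n) F) (hirr : Irreducible C.charpoly)
    (p₁ : ℕ) (hp₁ : p₁.Prime) (hscalar : ∃ z : F, C ^ p₁ = z • (1 : Matrix (Fin n) (Fin n) F)) :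
    IsLeast {m : ℕ | 0 < m ∧ p₁ * (Fintype.card F - 1) ∣ Fintype.card F ^ m - 1} n :=
  stmt_6_general F n hn C hirr p₁ hp₁ hscalar
end

section
/- Suppose the characteristic polynomial of C in GL_n(F_q) is irreducible and the multiplicative order of C is k. For any positive integer t such that kt divides q^n - 1, there exists a matrix M with M^t = C, the characteristic polynomial of M is irreducible, and the multiplicative order of M is kt. -/
/-!
The matrix `C` generates a copy of the field `K = F[X]/(χ_C)`, of order `q^n`, inside the
matrix algebra, with `C` corresponding to the root `c` of `χ_C`. Since `Kˣ` is cyclic and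
`kt ∣ q^n - 1`, `K` contains a primitive `kt`-th root of unity `ζ`; the primitive `k`-th root
`c` is then `(ζ^t)^i` with `i` prime to `k`, and lifting `i` to some `b` prime to `kt` gives
`y = ζ^b` with `y^t = c` of order `kt`. As `c ∈ F(y)`, `y` generates `K`, so its minimal
polynomial has degree `n` and is the characteristic polynomial of the matrix it maps to.
-/

open Matrix Polynomial IntermediateField

theorem Nat.exists_coprime_modEq {a n m : ℕ} (hm : m ≠ 0) (hnm : n ∣ m) (ha : a.Coprime n) :
    ∃ b, b.Coprime m ∧ b ≡ a [MOD n] := by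
  have : NeZero m := ⟨hm⟩
  obtain ⟨u, hu⟩ := ZMod.unitsMap_surjective hnm (ZMod.unitOfCoprime a ha)
  refine ⟨(u : ZMod m).val, ZMod.val_coe_unit_coprime u, ?_⟩
  rw [← ZMod.natCast_eq_natCast_iff, ZMod.natCast_val, ← ZMod.unitsMap_val hnm, hu,
    ZMod.coe_unitOfCoprime]

theorem IsPrimitiveRoot.exists_pow_eq {R : Type*} [CommRing R] [IsDomain R] {ζ x : R} {k t : ℕ}
    (hkt : k * t ≠ 0) (hζ : IsPrimitiveRoot ζ (k * t)) (hx : IsPrimitiveRoot x k) :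
    ∃ y, y ^ t = x ∧ IsPrimitiveRoot y (k * t) := by
  have hk : k ≠ 0 := left_ne_zero_of_mul hkt
  have : NeZero k := ⟨hk⟩
  have hζt : IsPrimitiveRoot (ζ ^ t) k := hζ.pow (Nat.pos_of_ne_zero hkt) (mul_comm k t)
  obtain ⟨i, -, rfl⟩ := hζt.eq_pow_of_pow_eq_one hx.pow_eq_one
  have hi : i.Coprime k := (hζt.pow_iff_coprime (Nat.pos_of_ne_zero hk) i).mp hx
  obtain ⟨b, hb, hbi⟩ := Nat.exists_coprime_modEq hkt (dvd_mul_right k t) hi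
  refine ⟨ζ ^ b, ?_, hζ.pow_of_coprime b hb⟩
  rw [← pow_mul, ← pow_mul, mul_comm t i]
  exact pow_eq_pow_of_modEq (hbi.mul_right' t) hζ.pow_eq_one

theorem FiniteField.exists_isPrimitiveRoot {K : Type*} [Field K] [Finite K] {m : ℕ}
    (hm : m ∣ Nat.card K - 1) : ∃ ζ : K, IsPrimitiveRoot ζ m := by
  obtain ⟨g, hg⟩ := IsCyclic.exists_ofOrder_eq_natCard (α := Kˣ)
  rw [← Nat.card_units K, ← hg] at hm
  refine ⟨(g ^ (orderOf g / m) : Kˣ), IsPrimitiveRoot.coe_units_iff.mpr ?_⟩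
  simpa only [orderOf_pow_orderOf_div (orderOf_pos g).ne' hm] using
    IsPrimitiveRoot.orderOf (g ^ (orderOf g / m))

theorem FiniteField.exists_pow_eq_and_orderOf_eq_mul {K : Type*} [Field K] [Finite K] {x : K}
    {t : ℕ} (h : orderOf x * t ∣ Nat.card K - 1) :
    ∃ y : K, y ^ t = x ∧ orderOf y = orderOf x * t := by
  have hpos : orderOf x * t ≠ 0 :=
    ne_zero_of_dvd_ne_zero (Nat.sub_ne_zero_of_lt Finite.one_lt_card) h
  obtain ⟨ζ, hζ⟩ := FiniteField.exists_isPrimitiveRoot h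
  obtain ⟨y, hyt, hy⟩ := hζ.exists_pow_eq hpos (IsPrimitiveRoot.orderOf x)
  exact ⟨y, hyt, hy.eq_orderOf.symm⟩

theorem IntermediateField.adjoin_simple_eq_top_of_pow_eq {F L : Type*} [Field F] [Field L]
    [Algebra F L] {x y : L} {t : ℕ} (hx : F⟮x⟯ = ⊤) (hyx : y ^ t = x) : F⟮y⟯ = ⊤ := by
  rw [eq_top_iff, ← hx, adjoin_simple_le_iff, ← hyx]
  exact pow_mem (mem_adjoin_simple_self F y) t

theorem Matrix.charpoly_eq_minpoly_of_natDegree_eq {K ι : Type*} [Field K] [Fintype ι]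
    [DecidableEq ι] (M : Matrix ι ι K) (h : (minpoly K M).natDegree = Fintype.card ι) :
    M.charpoly = minpoly K M :=
  eq_of_monic_of_dvd_of_natDegree_le (minpoly.monic (IsIntegral.of_finite K M))
    M.charpoly_monic M.minpoly_dvd_charpoly (by rw [M.charpoly_natDegree_eq_dim, h])

theorem AdjoinRoot.exists_injective_algHom_root_eq {F A : Type*} [Field F] [Ring A] [Nontrivial A]
    [Algebra F A] {p : F[X]} [Fact (Irreducible p)] {x : A} (hx : aeval x p = 0) :
    ∃ ψ : AdjoinRoot p →ₐ[F] A, Function.Injective ψ ∧ ψ (root p) = x := by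
  let ψ : AdjoinRoot p →ₐ[F] A := Ideal.Quotient.liftₐ _ (aeval x) fun q hq ↦
    aeval_eq_zero_of_dvd_aeval_eq_zero (Ideal.mem_span_singleton.mp hq) hx
  exact ⟨ψ, (ψ : AdjoinRoot p →+* A).injective, aeval_X x⟩

theorem Matrix.charpoly_algHom_eq_minpoly {F L ι : Type*} [Field F] [Field L] [Algebra F L]
    [Fintype ι] [DecidableEq ι] (φ : L →ₐ[F] Matrix ι ι F) (hφ : Function.Injective φ)
    (hL : Module.finrank F L = Fintype.card ι) {y : L} (hy : F⟮y⟯ = ⊤) :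
    (φ y).charpoly = minpoly F y := by
  have hint : IsIntegral F y := (isIntegral_algHom_iff φ hφ).mp (IsIntegral.of_finite F (φ y))
  have hdeg : (minpoly F y).natDegree = Fintype.card ι := by
    rw [← adjoin.finrank hint, hy, finrank_top', hL]
  rw [← minpoly.algHom_eq φ hφ y] at hdeg ⊢
  exact (φ y).charpoly_eq_minpoly_of_natDegree_eq hdeg

theorem stmt_7_general (F : Type*) [Field F] [Fintype F] (n : ℕ)
    (C : Matrix (Fin n) (Fin n) F) (hirr : Irreducible C.charpoly)
    (k t : ℕ) (hk : orderOf C = k) (hdvd : k * t ∣ Fintype.card F ^ n - 1) :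
    ∃ M : Matrix (Fin n) (Fin n) F,
      M ^ t = C ∧ Irreducible M.charpoly ∧ orderOf M = k * t := by
  subst hk
  have : Nonempty (Fin n) := by
    refine (isEmpty_or_nonempty (Fin n)).resolve_left fun _ ↦ ?_
    exact not_irreducible_one (charpoly_isEmpty (A := C) ▸ hirr)
  have : Fact (Irreducible C.charpoly) := ⟨hirr⟩
  have : Module.Finite F (AdjoinRoot C.charpoly) := C.charpoly_monic.finite_adjoinRoot
  have : Finite (AdjoinRoot C.charpoly) := Module.finite_of_finite F
  have hrank : Module.finrank F (AdjoinRoot C.charpoly) = n := by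
    rw [(AdjoinRoot.powerBasis C.charpoly_monic.ne_zero).finrank, AdjoinRoot.powerBasis_dim,
      C.charpoly_natDegree_eq_dim, Fintype.card_fin]
  obtain ⟨ψ, hψ, hroot⟩ := AdjoinRoot.exists_injective_algHom_root_eq C.aeval_self_charpoly
  have horder : ∀ y, orderOf (ψ y) = orderOf y := orderOf_injective ψ.toMonoidHom hψ
  obtain ⟨y, hyt, hy⟩ := FiniteField.exists_pow_eq_and_orderOf_eq_mul (t := t)
    (x := AdjoinRoot.root C.charpoly) (by
      rwa [Module.natCard_eq_pow_finrank (K := F), hrank, Nat.card_eq_fintype_card, ← horder,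
        hroot])
  refine ⟨ψ y, by rw [← map_pow, hyt, hroot], ?_, by rw [horder, hy, ← horder, hroot]⟩
  rw [charpoly_algHom_eq_minpoly ψ hψ (by rw [hrank, Fintype.card_fin])
    (adjoin_simple_eq_top_of_pow_eq (adjoin_root_eq_top _) hyt)]
  exact minpoly.irreducible (IsIntegral.of_finite F y)

/-- If `C ∈ GL_n(F_q)` has irreducible characteristic polynomial and multiplicative order `k`,
and `kt ∣ q^n - 1`, then `C` has a `t`-th root `M` with irreducible characteristic polynomial
and multiplicative order `kt`. -/
theorem stmt_7 (F : Type*) [Field F] [Fintype F] [DecidableEq F] (n : ℕ)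
    (C : Matrix (Fin n) (Fin n) F) (hC : IsUnit C) (hirr : Irreducible C.charpoly)
    (k t : ℕ) (hk : orderOf C = k) (ht : 0 < t) (hdvd : k * t ∣ Fintype.card F ^ n - 1) :
    ∃ M : Matrix (Fin n) (Fin n) F,
      M ^ t = C ∧ Irreducible M.charpoly ∧ orderOf M = k * t :=
  stmt_7_general F n C hirr k t hk hdvd
end

section
/- Suppose C is an n×n matrix over F_q whose characteristic polynomial is irreducible and whose multiplicative order is a power of a prime p_1. Then for any prime p_0 ≠ p_1, there exists a matrix M over F_q with M^{p_0} = C. Moreover, if p_0 divides q^n - 1, M can be chosen so that p_0 divides the multiplicative order of M. -/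
/-!
Since `p₀` is prime to the order of `C`, some power `C ^ m` (with `p₀ m ≡ 1` modulo that order) is
a `p₀`-th root of `C`. The irreducibility of `χ_C` makes `F[X]/(χ_C)` a field with `q ^ n`
elements that embeds into the matrices commuting with `C`; if `p₀ ∣ q ^ n - 1`, Cauchy's theorem
gives a unit `ζ` of order `p₀` in it, and `ζ C ^ m` is a `p₀`-th root of `C` of order
`p₀ · ord (C ^ m)`.
-/

open Matrix Polynomial

theorem AdjoinRoot.natCard_eq_pow_natDegree {K : Type*} [Field K] {f : K[X]} (hf : f ≠ 0) :
    Nat.card (AdjoinRoot f) = Nat.card K ^ f.natDegree := by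
  have : Module.Finite K (AdjoinRoot f) := (AdjoinRoot.powerBasis hf).finite
  rw [Module.natCard_eq_pow_finrank (K := K), ← finrank_quotient_span_eq_natDegree]
  rfl

theorem Matrix.exists_commute_orderOf_eq_of_irreducible_charpoly {F ι : Type*} [Field F]
    [Finite F] [Fintype ι] [DecidableEq ι] {C : Matrix ι ι F} (hC : Irreducible C.charpoly)
    {p : ℕ} (hp : p.Prime) (hdvd : p ∣ Nat.card F ^ Fintype.card ι - 1) :
    ∃ ζ : Matrix ι ι F, Commute ζ C ∧ orderOf ζ = p := by
  have : Fact (Irreducible C.charpoly) := ⟨hC⟩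
  have : Fact p.Prime := ⟨hp⟩
  -- makes the matrix ring nontrivial, so that the field `F[X]/(χ_C)` embeds into it
  have : Nonempty ι := Fintype.card_pos_iff.mp (C.charpoly_natDegree_eq_dim ▸ hC.natDegree_pos)
  have hcard : Nat.card (AdjoinRoot C.charpoly) = Nat.card F ^ Fintype.card ι := by
    rw [AdjoinRoot.natCard_eq_pow_natDegree hC.ne_zero, C.charpoly_natDegree_eq_dim]
  have : Finite (AdjoinRoot C.charpoly) := Nat.finite_of_card_ne_zero (by
    rw [hcard]; exact pow_ne_zero _ Nat.card_pos.ne')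
  obtain ⟨u, hu⟩ := exists_prime_orderOf_dvd_card' (G := (AdjoinRoot C.charpoly)ˣ) p
    (by rwa [Nat.card_units, hcard])
  let φ : AdjoinRoot C.charpoly →+* Matrix ι ι F :=
    Ideal.Quotient.lift _ (aeval C).toRingHom fun _ ha ↦ by
      obtain ⟨g, rfl⟩ := Ideal.mem_span_singleton'.mp ha
      simp [aeval_self_charpoly]
  have hφC : φ (AdjoinRoot.root C.charpoly) = C :=
    (Ideal.Quotient.lift_mk _ _ _).trans (aeval_X C)
  refine ⟨φ u, ?_, ?_⟩
  · simpa only [hφC] using (Commute.all (u : AdjoinRoot C.charpoly)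
      (AdjoinRoot.root C.charpoly)).map φ
  · rw [← hu, ← orderOf_units]
    exact orderOf_injective φ.toMonoidHom φ.injective _

theorem stmt_8_general (F : Type*) [Field F] [Fintype F] (n : ℕ)
    (C : Matrix (Fin n) (Fin n) F) (hirr : Irreducible C.charpoly)
    (p₁ : ℕ) (hp₁ : p₁.Prime) (horder : ∃ k : ℕ, orderOf C = p₁ ^ k)
    (p₀ : ℕ) (hp₀ : p₀.Prime) (hne : p₀ ≠ p₁) :
    (∃ M : Matrix (Fin n) (Fin n) F, M ^ p₀ = C) ∧
    (p₀ ∣ Fintype.card F ^ n - 1 →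
      ∃ M : Matrix (Fin n) (Fin n) F, M ^ p₀ = C ∧ p₀ ∣ orderOf M) := by
  obtain ⟨k, hk⟩ := horder
  have hcop : p₀.Coprime (orderOf C) := hk ▸ ((Nat.coprime_primes hp₀ hp₁).2 hne).pow_right k
  obtain ⟨m, hm⟩ := exists_pow_eq_self_of_coprime hcop
  have hroot : (C ^ m) ^ p₀ = C := by rwa [← pow_right_comm]
  refine ⟨⟨C ^ m, hroot⟩, fun hdvd => ?_⟩
  obtain ⟨ζ, hcomm, hζ⟩ := exists_commute_orderOf_eq_of_irreducible_charpoly hirr hp₀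
    (by rwa [Nat.card_eq_fintype_card, Fintype.card_fin])
  have hcomm' : Commute ζ (C ^ m) := hcomm.pow_right m
  refine ⟨ζ * C ^ m, ?_, ?_⟩
  · rw [hcomm'.mul_pow, hroot, ← hζ, pow_orderOf_eq_one, one_mul]
  · rw [hcomm'.orderOf_mul_eq_mul_orderOf_of_coprime
      (hζ ▸ hcop.coprime_dvd_right (orderOf_pow_dvd m)), hζ]
    exact dvd_mul_right _ _

/-- If `C` is an `n × n` matrix over `F_q` with irreducible characteristic polynomial whose
multiplicative order is a power of a prime `p₁`, then for any prime `p₀ ≠ p₁`, `C` has a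
`p₀`-th root; moreover if `p₀ ∣ q^n - 1` then `C` has a `p₀`-th root whose multiplicative
order is a multiple of `p₀`. -/
theorem stmt_8 (F : Type*) [Field F] [Fintype F] [DecidableEq F] (n : ℕ)
    (C : Matrix (Fin n) (Fin n) F) (hirr : Irreducible C.charpoly)
    (p₁ : ℕ) (hp₁ : p₁.Prime) (horder : ∃ k : ℕ, orderOf C = p₁ ^ k)
    (p₀ : ℕ) (hp₀ : p₀.Prime) (hne : p₀ ≠ p₁) :
    (∃ M : Matrix (Fin n) (Fin n) F, M ^ p₀ = C) ∧
    (p₀ ∣ Fintype.card F ^ n - 1 →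
      ∃ M : Matrix (Fin n) (Fin n) F, M ^ p₀ = C ∧ p₀ ∣ orderOf M) :=
  stmt_8_general F n C hirr p₁ hp₁ horder p₀ hp₀ hne
end

section
/- Let q be a power of a prime p and n ≥ 2. If A is in GL_n(F_q), A is not a scalar multiple of the identity, and the order of the image of A in PGL_n(F_q) is coprime to p, then the minimal polynomial of A is separable (squarefree). -/
/-!
If `m` is the projective order of `A`, then `A ^ m` is central in `GL_n(F)`, hence equal to
`u • 1` for a unit `u`. So `A` is a root of `X ^ m - u`, which is separable because `m` is
coprime to the characteristic; the minimal polynomial of `A` divides it.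
-/

open Matrix

/-- The projective order of `A ∈ GL_n(F)`: the order of its image in
`PGL_n(F) = GL_n(F)/Z(GL_n(F))`. -/
noncomputable def projOrder {F : Type*} [Field F] {n : ℕ} (A : GL (Fin n) F) : ℕ :=
  orderOf (QuotientGroup.mk' (Subgroup.center (GL (Fin n) F)) A)

theorem QuotientGroup.pow_orderOf_mk_mem {G : Type*} [Group G] (N : Subgroup G) [N.Normal]
    (g : G) : g ^ orderOf (QuotientGroup.mk' N g) ∈ N := by
  rw [← QuotientGroup.eq_one_iff, QuotientGroup.mk_pow]
  exact pow_orderOf_eq_one _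

theorem CharP.isUnit_natCast_of_coprime {R : Type*} [Ring R] {p : ℕ} [CharP R p] {m : ℕ}
    (h : m.Coprime p) : IsUnit (m : R) :=
  letI := invertibleOfCoprime (R := R) h
  isUnit_of_invertible _

theorem minpoly_separable_of_pow_eq_algebraMap {F A : Type*} [Field F] [Ring A] [Algebra F A]
    {a : A} {m : ℕ} (u : Fˣ) (hm : IsUnit (m : F)) (h : a ^ m = algebraMap F A u) :
    (minpoly F a).Separable :=
  (Polynomial.separable_X_pow_sub_C_unit u hm).of_dvd (minpoly.dvd F a (by simp [h]))

theorem exists_pow_projOrder_eq_algebraMap {F : Type*} [Field F] {n : ℕ} (A : GL (Fin n) F) :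
    ∃ u : Fˣ, (A : Matrix (Fin n) (Fin n) F) ^ projOrder A = algebraMap F _ u := by
  have hcenter : A ^ projOrder A ∈ Subgroup.center (GL (Fin n) F) :=
    QuotientGroup.pow_orderOf_mk_mem _ A
  rw [GeneralLinearGroup.center_eq_range_scalar] at hcenter
  obtain ⟨u, hu⟩ := hcenter
  refine ⟨u, ?_⟩
  rw [← Units.val_pow_eq_pow_val, ← hu, algebraMap_eq_diagonal]
  rfl

theorem stmt_10_general (F : Type*) [Field F] (p : ℕ)
    [CharP F p] (n : ℕ) (A : GL (Fin n) F)
    (hco : Nat.Coprime (projOrder A) p) :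
    (minpoly F (A : Matrix (Fin n) (Fin n) F)).Separable := by
  obtain ⟨u, hu⟩ := exists_pow_projOrder_eq_algebraMap A
  exact minpoly_separable_of_pow_eq_algebraMap u (CharP.isUnit_natCast_of_coprime hco) hu

/-- If `q` is a power of a prime `p`, `n ≥ 2`, `A ∈ GL_n(F_q)` is not a scalar multiple of the
identity, and the projective order of `A` is coprime to `p`, then the minimal polynomial of
`A` is separable. -/
theorem stmt_10 (F : Type*) [Field F] [Fintype F] [DecidableEq F] (p : ℕ) (hp : p.Prime)
    [CharP F p] (n : ℕ) (hn : 2 ≤ n) (A : GL (Fin n) F)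
    (hns : ¬∃ z : F, (A : Matrix (Fin n) (Fin n) F) = z • (1 : Matrix (Fin n) (Fin n) F))
    (hco : Nat.Coprime (projOrder A) p) :
    (minpoly F (A : Matrix (Fin n) (Fin n) F)).Separable :=
  stmt_10_general F p n A hco
end

section
/- Let q be a power of a prime p and n ≥ 2. If A is in GL_n(F_q) and p divides the projective order of A, then some power A' of A has minimal polynomial (x-1)^k for some k with 2 ≤ k ≤ p. -/
/-! If `p ∣ projOrder A` then `p` divides the order of `A`, so `B = A ^ (orderOf A / p)` has
order exactly `p`. In characteristic `p`, `X ^ p - 1 = (X - 1) ^ p`, so the minimal polynomial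
of `B` divides `(X - 1) ^ p` and hence equals `(X - 1) ^ k` with `k ≤ p`; and `k ≥ 2` because
`(X - 1) ^ k` with `k ≤ 1` divides `X - 1`, which does not annihilate `B ≠ 1`. -/

open Matrix Polynomial

section MinpolyOfUnipotent

variable {F R : Type*} [Field F] [Ring R] [Algebra F R]

theorem minpoly_eq_X_sub_one_pow_of_pow_char_eq_one (p : ℕ) [Fact p.Prime] [CharP F p]
    {a : R} (ha : a ^ p = 1) : ∃ k ≤ p, minpoly F a = (X - 1 : F[X]) ^ k := by
  have hann : aeval a ((X - 1 : F[X]) ^ p) = 0 := by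
    rw [sub_pow_char, one_pow, map_sub, map_pow, aeval_X, ha, map_one, sub_self]
  have hmonic : ((X - 1 : F[X]) ^ p).Monic := by simpa using (monic_X_sub_C (1 : F)).pow p
  have hint : IsIntegral F a := ⟨_, hmonic, hann⟩
  obtain ⟨k, hkp, hassoc⟩ :=
    (dvd_prime_pow (by simpa using prime_X_sub_C (1 : F)) p).mp (minpoly.dvd F a hann)
  exact ⟨k, hkp, eq_of_monic_of_associated (minpoly.monic hint)
    (by simpa using (monic_X_sub_C (1 : F)).pow k) hassoc⟩

theorem minpoly_eq_X_sub_one_pow_of_orderOf_eq_char {p : ℕ} (hp : p.Prime) [CharP F p]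
    {a : R} (ha : orderOf a = p) :
    ∃ k, 2 ≤ k ∧ k ≤ p ∧ minpoly F a = (X - 1 : F[X]) ^ k := by
  have : Fact p.Prime := ⟨hp⟩
  obtain ⟨k, hkp, hmin⟩ :=
    minpoly_eq_X_sub_one_pow_of_pow_char_eq_one (F := F) p (ha ▸ pow_orderOf_eq_one a)
  refine ⟨k, ?_, hkp, hmin⟩
  by_contra! hk
  have hdvd : minpoly F a ∣ X - 1 := by
    simpa [hmin] using pow_dvd_pow (X - 1 : F[X]) (show k ≤ 1 by omega)
  have ha1 : a = 1 := by
    simpa [sub_eq_zero] using aeval_eq_zero_of_dvd_aeval_eq_zero hdvd (minpoly.aeval F a)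
  exact hp.one_lt.ne' (by rw [← ha, ha1, orderOf_one])

end MinpolyOfUnipotent

theorem stmt_12_general (F : Type*) [Field F] [Fintype F] (p : ℕ) (hp : p.Prime)
    [CharP F p] (n : ℕ) (A : GL (Fin n) F) (hdvd : p ∣ projOrder A) :
    ∃ m k : ℕ, 2 ≤ k ∧ k ≤ p ∧
      minpoly F ((A : Matrix (Fin n) (Fin n) F) ^ m) = (X - 1 : F[X]) ^ k := by
  have hpA : p ∣ orderOf A := hdvd.trans (orderOf_map_dvd _ A)
  have horder : orderOf (A ^ (orderOf A / p)) = p :=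
    orderOf_pow_orderOf_div (orderOf_pos A).ne' hpA
  refine ⟨orderOf A / p, minpoly_eq_X_sub_one_pow_of_orderOf_eq_char hp ?_⟩
  rwa [← Units.val_pow_eq_pow_val, orderOf_units]

/-- Let `q` be a power of a prime `p` and `n ≥ 2`. If `A ∈ GL_n(F_q)` and `p` divides the
projective order of `A`, then some power `A'` of `A` has minimal polynomial `(x-1)^k` for
some `2 ≤ k ≤ p`. -/
theorem stmt_12 (F : Type*) [Field F] [Fintype F] [DecidableEq F] (p : ℕ) (hp : p.Prime)
    [CharP F p] (n : ℕ) (hn : 2 ≤ n) (A : GL (Fin n) F) (hdvd : p ∣ projOrder A) :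
    ∃ m k : ℕ, 2 ≤ k ∧ k ≤ p ∧
      minpoly F ((A : Matrix (Fin n) (Fin n) F) ^ m) = (X - 1 : F[X]) ^ k :=
  stmt_12_general F p hp n A hdvd
end

section
/- Let q be a power of a prime p, and n ≥ 3 with n ≥ 4 when q = 2. Let J be the n×n matrix equal to the identity except with a 1 in the upper-right corner, and let A be the diagonal matrix diag(1, x, 1, ..., 1) for some x ≠ 1 in F_q^* (when q ≠ 2). Then A and J commute, (AJ)^{q^2} = A, and (AJ)^{(q^2-1)^2} = J; in particular both A and J are powers of AJ. -/
/-!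
`J` is the transvection `1 + E₁ₙ`, and `E₁ₙ² = 0` gives `J ^ m = 1 + m • E₁ₙ`, which depends only
on `m` modulo `p`. The diagonal matrix `A` has its entries in `F_q^*`, so `A ^ (q²) = A` and
`A ^ (q² - 1) = 1`. Since the first and last diagonal entries of `A` agree, `A` commutes with `J`,
hence `(AJ) ^ m = A ^ m * J ^ m`; it remains to note `q² ≡ 0` and `(q² - 1)² ≡ 1` modulo `p`.
-/

open Matrix

namespace Matrix

variable {n R : Type*} [Fintype n] [DecidableEq n] [CommRing R]

theorem transvection_pow {i j : n} (hij : i ≠ j) (c : R) (m : ℕ) :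
    transvection i j c ^ m = transvection i j (m * c) := by
  induction m with
  | zero => simp
  | succ m ih =>
    rw [pow_succ, ih, transvection_mul_transvection_same _ _ hij, Nat.cast_succ, add_one_mul]

theorem commute_diagonal_single {d : n → R} {i j : n} (h : d i = d j) (c : R) :
    Commute (diagonal d) (single i j c) := by
  ext a b
  simp only [diagonal_mul, mul_diagonal, single_apply]
  split_ifs with hab
  · rw [← hab.1, ← hab.2, h, mul_comm]
  · simp

theorem commute_diagonal_transvection {d : n → R} {i j : n} (h : d i = d j) (c : R) :
    Commute (diagonal d) (transvection i j c) :=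
  (Commute.one_right _).add_right (commute_diagonal_single h c)

end Matrix

namespace FiniteField

variable {K ι : Type*} [Field K] [Fintype K] [Fintype ι] [DecidableEq ι]

theorem diagonal_pow_card_pow (d : ι → K) (k : ℕ) :
    diagonal d ^ Fintype.card K ^ k = diagonal d := by
  rw [diagonal_pow]
  congr 1
  funext i
  exact pow_card_pow k (d i)

theorem diagonal_pow_eq_one {d : ι → K} (hd : ∀ i, d i ≠ 0) {m : ℕ}
    (hm : Fintype.card K - 1 ∣ m) : diagonal d ^ m = 1 := by
  obtain ⟨k, rfl⟩ := hm
  rw [diagonal_pow, ← diagonal_one]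
  congr 1
  funext i
  rw [Pi.pow_apply, pow_mul, pow_card_sub_one_eq_one _ (hd i), one_pow]

end FiniteField

/-- For `q ≠ 2` and `n ≥ 3`, with `J` the identity matrix plus an extra `1` in the upper
right corner and `A = diag(1, x, 1, …, 1)` for `x ≠ 0, 1`: `A` and `J` commute,
`(AJ)^{q²} = A`, and `(AJ)^{(q²-1)²} = J`; in particular `A` and `J` are powers of `AJ`. -/
theorem stmt_13 (F : Type*) [Field F] [Fintype F] (n : ℕ) (hn : 3 ≤ n)
    (x : F) (hx0 : x ≠ 0)
    (J A : Matrix (Fin n) (Fin n) F)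
    (hJ : J = 1 + Matrix.single (⟨0, by omega⟩ : Fin n) (⟨n - 1, by omega⟩ : Fin n) 1)
    (hA : A = Matrix.diagonal (fun i : Fin n => if (i : ℕ) = 1 then x else 1)) :
    A * J = J * A ∧ (A * J) ^ (Fintype.card F ^ 2) = A ∧
      (A * J) ^ ((Fintype.card F ^ 2 - 1) ^ 2) = J := by
  set q := Fintype.card F
  have hcorner : (⟨0, by omega⟩ : Fin n) ≠ ⟨n - 1, by omega⟩ := by
    simp only [ne_eq, Fin.mk.injEq]
    omega
  replace hJ : J = transvection _ _ 1 := hJ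
  have hcomm : Commute A J := by
    rw [hA, hJ]
    exact commute_diagonal_transvection (by rw [if_neg zero_ne_one, if_neg (by simp only; omega)]) 1
  have hA_ne_zero : ∀ i : Fin n, (if (i : ℕ) = 1 then x else 1) ≠ 0 := fun i => by
    split_ifs
    exacts [hx0, one_ne_zero]
  have hdvd : q - 1 ∣ (q ^ 2 - 1) ^ 2 :=
    (Nat.sub_one_dvd_pow_sub_one q 2).trans (dvd_pow_self _ two_ne_zero)
  have hq_sq : ((q ^ 2 : ℕ) : F) = 0 := by
    rw [Nat.cast_pow, FiniteField.cast_card_eq_zero, zero_pow two_ne_zero]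
  have hq_sq_sub_one_sq : (((q ^ 2 - 1) ^ 2 : ℕ) : F) = 1 := by
    rw [Nat.cast_pow, Nat.cast_sub (Nat.one_le_pow _ _ Fintype.card_pos), hq_sq]
    norm_num
  refine ⟨hcomm.eq, ?_, ?_⟩
  · rw [hcomm.mul_pow, hA, FiniteField.diagonal_pow_card_pow, hJ, transvection_pow hcorner, hq_sq,
      zero_mul, transvection_zero, mul_one]
  · rw [hcomm.mul_pow, hA, FiniteField.diagonal_pow_eq_one hA_ne_zero hdvd, one_mul, hJ,
      transvection_pow hcorner, hq_sq_sub_one_sq, one_mul]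
end

section
/- Let n ≥ 2 and X in GL_n(F_q). There exist a unit upper triangular matrix U and the permutation matrix T swapping coordinates 1 and n such that XUT has nonzero lower-left entry (position (n,1)) and invertible lower-left (n-1)×(n-1) block (rows 2..n, columns 1..n-1). -/
/-!
Right multiplication by a unit upper triangular matrix adds multiples of earlier columns to later
ones, and right multiplication by `T` swaps the first and last columns. Hence the corner entry of
`X U T` is `(X U)ₙₙ`, and its block is the lower-right block of `X U` with columns rotated.

The last `n - 1` rows of `X` have rank `n - 1`, so their `n` columns span. If columns `2, …, n`
are dependent, one of them, say column `k`, lies in the span of the others; adding column `1` to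
column `k` then puts column `1` into the span of columns `2, …, n`, which therefore span. If
afterwards `(X U)ₙₙ = 0`, the last row of the invertible lower-right block has a nonzero entry in
some column `k < n`, and adding column `k` to column `n` makes the corner nonzero without changing
the determinant of the block.
-/

open Function Matrix Submodule

theorem exists_linearIndependent_update_add_smul {K V ι : Type*} [DivisionRing K] [AddCommGroup V]
    [Module K V] [Fintype ι] [DecidableEq ι] [Nonempty ι] (hι : Fintype.card ι = Module.finrank K V)
    (u : V) (w : ι → V) (hspan : span K (insert u (Set.range w)) = ⊤) :
    ∃ k : ι, ∃ c : K, LinearIndependent K (update w k (w k + c • u)) := by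
  by_cases hw : LinearIndependent K w
  · exact ⟨Classical.arbitrary ι, 0, by simpa using hw⟩
  rw [linearIndependent_iff_notMem_span] at hw
  push Not at hw
  obtain ⟨k, hk⟩ := hw
  refine ⟨k, 1, linearIndependent_of_top_le_span_of_card_eq_finrank ?_ hι⟩
  set S := span K (Set.range (update w k (w k + (1 : K) • u)))
  have hw_mem : ∀ j, j ≠ k → w j ∈ S := fun j hj =>
    subset_span ⟨j, update_of_ne hj _ _⟩
  have hwk : w k ∈ S := span_le.2 (by rintro _ ⟨j, hj, rfl⟩; exact hw_mem j hj.2) hk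
  have hu : u ∈ S := by
    have : w k + u ∈ S := subset_span ⟨k, by simp⟩
    simpa using S.sub_mem this hwk
  rw [← hspan, span_le]
  rintro _ (rfl | ⟨j, rfl⟩)
  · exact hu
  · by_cases hj : j = k
    · exact hj ▸ hwk
    · exact hw_mem j hj

namespace Matrix

section UnitUpperTriangular

variable {n R : Type*} [Fintype n] [LinearOrder n]

theorem IsUpperTriangular.mul_apply_self [Semiring R] {U V : Matrix n n R}
    (hU : U.IsUpperTriangular) (hV : V.IsUpperTriangular) (i : n) :
    (U * V) i i = U i i * V i i := by
  rw [mul_apply, Finset.sum_eq_single i]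
  · intro k _ hk
    rcases hk.lt_or_gt with h | h
    · rw [hU h, zero_mul]
    · rw [hV h, mul_zero]
  · simp

variable [DecidableEq n]

variable (n R) in
def unitUpperTriangular [Semiring R] : Submonoid (Matrix n n R) where
  carrier := {U | (∀ i, U i i = 1) ∧ U.IsUpperTriangular}
  one_mem' := ⟨fun i => one_apply_eq i, blockTriangular_one⟩
  mul_mem' := fun {U V} ⟨hU1, hU⟩ ⟨hV1, hV⟩ =>
    ⟨fun i => by rw [hU.mul_apply_self hV, hU1, hV1, one_mul], hU.mul hV⟩

theorem transvection_mem_unitUpperTriangular [CommRing R] {i j : n} (hij : i < j) (c : R) :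
    transvection i j c ∈ unitUpperTriangular n R :=
  ⟨fun k => by
      simpa [transvection] using
        single_apply_of_ne i j c k k fun h => hij.ne (h.1.trans h.2.symm),
    blockTriangular_transvection hij.le c⟩

end UnitUpperTriangular

theorem submatrix_mul_transvection {k l m n R : Type*} [Fintype m] [Fintype n] [DecidableEq m]
    [DecidableEq n] [CommRing R] (M : Matrix l m R) (f : n → m) (hf : Injective f) (g : k → l)
    (i j : n) (c : R) :
    (M * transvection (f i) (f j) c).submatrix g f = M.submatrix g f * transvection i j c := by
  ext a b
  by_cases hb : b = j
  · subst hb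
    simp
  · simp [hb, hf.ne hb]

theorem span_col_submatrix_eq_top {R ι κ : Type*} [CommRing R] [Fintype ι] [DecidableEq ι]
    {X : Matrix ι ι R} (hX : IsUnit X) {f : κ → ι} (hf : Injective f) :
    span R (Set.range (X.submatrix f id).col) = ⊤ := by
  rw [← range_mulVecLin, LinearMap.range_eq_top]
  intro y
  obtain ⟨z, rfl⟩ := hf.surjective_comp_right y
  obtain ⟨x, rfl⟩ := mulVec_surjective_iff_isUnit.2 hX z
  exact ⟨x, rfl⟩

section LastCorner

variable {K : Type*} [Field K] {m : ℕ}

theorem exists_isUnit_submatrix_succ_mul_unitUpperTriangular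
    {X : Matrix (Fin (m + 2)) (Fin (m + 2)) K} (hX : IsUnit X) :
    ∃ U ∈ unitUpperTriangular (Fin (m + 2)) K, IsUnit ((X * U).submatrix Fin.succ Fin.succ) := by
  set L := X.submatrix Fin.succ id
  have hspan : span K (insert (L.col 0) (Set.range (Fin.tail L.col))) = ⊤ := by
    rw [← Fin.range_fin_succ]
    exact span_col_submatrix_eq_top hX (Fin.succ_injective _)
  obtain ⟨k, c, hli⟩ :=
    exists_linearIndependent_update_add_smul (by simp) (L.col 0) (Fin.tail L.col) hspan
  refine ⟨transvection 0 k.succ c, transvection_mem_unitUpperTriangular k.succ_pos c, ?_⟩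
  have hcol : ((X * transvection 0 k.succ c).submatrix Fin.succ Fin.succ).col =
      update (Fin.tail L.col) k (Fin.tail L.col k + c • L.col 0) := by
    ext j i
    by_cases hj : j = k
    · subst hj
      simp [L, Fin.tail]
    · simp [L, Fin.tail, hj]
  rwa [← linearIndependent_cols_iff_isUnit, hcol]

theorem exists_mul_unitUpperTriangular_last_ne_zero
    {M : Matrix (Fin (m + 2)) (Fin (m + 2)) K} (hM : IsUnit (M.submatrix Fin.succ Fin.succ)) :
    ∃ U ∈ unitUpperTriangular (Fin (m + 2)) K, (M * U) (Fin.last _) (Fin.last _) ≠ 0 ∧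
      IsUnit ((M * U).submatrix Fin.succ Fin.succ) := by
  by_cases hlast : M (Fin.last _) (Fin.last _) ≠ 0
  · exact ⟨1, one_mem _, by simpa using hlast, by simpa using hM⟩
  rw [not_not] at hlast
  obtain ⟨k, hk⟩ : ∃ k : Fin (m + 1), M (Fin.last _) k.succ ≠ 0 := by
    by_contra! h
    refine ((isUnit_iff_isUnit_det _).1 hM).ne_zero (det_eq_zero_of_row_eq_zero (Fin.last m) ?_)
    simpa [Fin.succ_last] using h
  have hk_lt : k.succ < Fin.last (m + 1) :=
    (Fin.le_last _).lt_of_ne (by rintro h; rw [h] at hk; exact hk hlast)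
  refine ⟨transvection k.succ (Fin.last _) 1, transvection_mem_unitUpperTriangular hk_lt 1,
    by simpa [hlast] using hk, ?_⟩
  rw [← Fin.succ_last, submatrix_mul_transvection _ _ (Fin.succ_injective _)]
  have hk_ne : k ≠ Fin.last m := by simpa [← Fin.succ_last] using hk_lt.ne
  exact hM.mul ((isUnit_iff_isUnit_det _).2 (by simp [hk_ne]))

theorem exists_mul_unitUpperTriangular_last_ne_zero_of_isUnit
    {X : Matrix (Fin (m + 2)) (Fin (m + 2)) K} (hX : IsUnit X) :
    ∃ U ∈ unitUpperTriangular (Fin (m + 2)) K, (X * U) (Fin.last _) (Fin.last _) ≠ 0 ∧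
      IsUnit ((X * U).submatrix Fin.succ Fin.succ) := by
  obtain ⟨U₁, hU₁, hblock⟩ := exists_isUnit_submatrix_succ_mul_unitUpperTriangular hX
  obtain ⟨U₂, hU₂, hcorner, hblock'⟩ := exists_mul_unitUpperTriangular_last_ne_zero hblock
  exact ⟨U₁ * U₂, mul_mem hU₁ hU₂, by rwa [← mul_assoc], by rwa [← mul_assoc]⟩

end LastCorner

end Matrix

theorem Fin.swap_zero_last_castSucc {m : ℕ} (j : Fin (m + 1)) :
    Equiv.swap 0 (Fin.last (m + 1)) j.castSucc = ((finRotate (m + 1)).symm j).succ := by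
  induction j using Fin.cases with
  | zero => ext; simp
  | succ i =>
    rw [Equiv.swap_apply_of_ne_of_ne (Fin.castSucc_ne_zero_iff.2 (Fin.succ_ne_zero i))
      (Fin.castSucc_ne_last _)]
    ext
    simp [Fin.coe_sub_one]

/-- For any `X ∈ GL_n(F_q)` (`n ≥ 2`) there is a unit upper triangular matrix `U` such that,
with `T` the permutation matrix swapping coordinates `1` and `n`, the matrix `X U T` has
nonzero lower-left entry and invertible lower-left `(n-1) × (n-1)` block. -/
theorem stmt_15 (F : Type*) [Field F] (n : ℕ) (hn : 2 ≤ n)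
    (T : Matrix (Fin n) (Fin n) F)
    (hT : T = Matrix.of fun i j : Fin n =>
      if j = Equiv.swap (⟨0, by omega⟩ : Fin n) (⟨n - 1, by omega⟩ : Fin n) i then 1 else 0)
    (X : Matrix (Fin n) (Fin n) F) (hX : IsUnit X) :
    ∃ U : Matrix (Fin n) (Fin n) F,
      (∀ i : Fin n, U i i = 1) ∧ (∀ i j : Fin n, j < i → U i j = 0) ∧
      (X * U * T) (⟨n - 1, by omega⟩ : Fin n) (⟨0, by omega⟩ : Fin n) ≠ 0 ∧
      IsUnit ((X * U * T).submatrix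
        (fun i : Fin (n - 1) => (⟨(i : ℕ) + 1, by omega⟩ : Fin n))
        (fun j : Fin (n - 1) => (⟨(j : ℕ), by omega⟩ : Fin n))) := by
  obtain ⟨m, rfl⟩ : ∃ m, n = m + 2 := ⟨n - 2, by omega⟩
  obtain ⟨U, ⟨hdiag, hupper⟩, hcorner, hblock⟩ :=
    exists_mul_unitUpperTriangular_last_ne_zero_of_isUnit hX
  set σ := Equiv.swap (0 : Fin (m + 2)) (Fin.last (m + 1))
  have hXUT : X * U * T = (X * U).submatrix id σ := by
    have : T = σ.toPEquiv.toMatrix := by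
      ext i j
      rw [hT, of_apply, PEquiv.toMatrix_apply, Equiv.toPEquiv_apply]
      exact if_congr (Option.mem_some_iff.trans eq_comm).symm rfl rfl
    rw [this, PEquiv.mul_toMatrix_toPEquiv, Equiv.symm_swap]
  refine ⟨U, hdiag, fun i j h => hupper h, ?_, ?_⟩
  · rw [hXUT]
    simpa [σ, Fin.last] using hcorner
  · have hcols : σ ∘ Fin.castSucc = Fin.succ ∘ (finRotate (m + 1)).symm :=
      funext Fin.swap_zero_last_castSucc
    rw [hXUT, submatrix_submatrix]
    change IsUnit ((X * U).submatrix Fin.succ (σ ∘ Fin.castSucc))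
    rw [hcols]
    exact (isUnit_submatrix_equiv (Equiv.refl _) (finRotate (m + 1)).symm).2 hblock
end

section
/- Let p be the characteristic of F_q and 2 ≤ n ≤ p. Let A in GL_n(F_q) be a single Jordan block with eigenvalue λ in F_q^* (i.e., λ on the diagonal, 1 on the superdiagonal, 0 elsewhere). If B^k = z·A for some z in F_q^* and positive integer k, then B is a scalar multiple of a power of A. -/
/-!
Since `B` commutes with `B ^ k = z • A`, it commutes with the nilpotent shift `A - λ • 1`, which
forces `B` to be upper triangular with constant diagonal `b`. Then `B - b • 1` is nilpotent of
index at most `n ≤ p`, so `B ^ p = b ^ p • 1` by the Frobenius identity; likewise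
`A ^ p = λ ^ p • 1`. As `A` is not scalar, `p ∤ k`, and choosing `k s = p t + 1` gives
`b ^ (p t) • B = B ^ (k s) = z ^ s • A ^ s`.
-/

open Matrix

theorem Matrix.pow_card_eq_zero_of_isUpperTriangular {ι R : Type*} [Fintype ι] [DecidableEq ι]
    [LinearOrder ι] [CommRing R] {M : Matrix ι ι R} (hM : M.IsUpperTriangular)
    (hdiag : ∀ i, M i i = 0) : M ^ Fintype.card ι = 0 := by
  simpa [charpoly_of_isUpperTriangular M hM, hdiag] using aeval_self_charpoly M

def shiftMatrix (n : ℕ) (R : Type*) [Zero R] [One R] : Matrix (Fin n) (Fin n) R :=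
  of fun i j => if (j : ℕ) = i + 1 then 1 else 0

section shiftMatrix

variable {R : Type*} {n : ℕ}

theorem mul_shiftMatrix_apply_succ [Semiring R] (B : Matrix (Fin n) (Fin n) R) {a b : ℕ}
    (ha : a < n) (hb : b + 1 < n) :
    (B * shiftMatrix n R) ⟨a, ha⟩ ⟨b + 1, hb⟩ = B ⟨a, ha⟩ ⟨b, by omega⟩ := by
  simp only [mul_apply, shiftMatrix, of_apply, mul_ite, mul_one, mul_zero, add_left_inj]
  rw [Fintype.sum_eq_single ⟨b, by omega⟩] <;> simp +contextual [Fin.ext_iff, eq_comm]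

theorem mul_shiftMatrix_apply_zero [Semiring R] (B : Matrix (Fin n) (Fin n) R) (i : Fin n)
    (h0 : 0 < n) : (B * shiftMatrix n R) i ⟨0, h0⟩ = 0 := by
  simp [mul_apply, shiftMatrix]

theorem shiftMatrix_mul_apply [Semiring R] (B : Matrix (Fin n) (Fin n) R) {a : ℕ}
    (ha : a + 1 < n) (j : Fin n) :
    (shiftMatrix n R * B) ⟨a, by omega⟩ j = B ⟨a + 1, ha⟩ j := by
  simp only [mul_apply, shiftMatrix, of_apply, ite_mul, one_mul, zero_mul]
  rw [Fintype.sum_eq_single ⟨a + 1, ha⟩] <;> simp +contextual [Fin.ext_iff]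

variable [Semiring R] {B : Matrix (Fin n) (Fin n) R}

theorem apply_succ_succ_of_commute_shiftMatrix (hB : Commute B (shiftMatrix n R)) {a b : ℕ}
    (ha : a + 1 < n) (hb : b + 1 < n) :
    B ⟨a + 1, ha⟩ ⟨b + 1, hb⟩ = B ⟨a, by omega⟩ ⟨b, by omega⟩ := by
  rw [← shiftMatrix_mul_apply B ha, ← hB.eq, mul_shiftMatrix_apply_succ]

theorem apply_succ_zero_of_commute_shiftMatrix (hB : Commute B (shiftMatrix n R)) {a : ℕ}
    (ha : a + 1 < n) : B ⟨a + 1, ha⟩ ⟨0, by omega⟩ = 0 := by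
  rw [← shiftMatrix_mul_apply B ha, ← hB.eq, mul_shiftMatrix_apply_zero]

theorem isUpperTriangular_of_commute_shiftMatrix (hB : Commute B (shiftMatrix n R)) :
    B.IsUpperTriangular := by
  rintro ⟨a, ha⟩ ⟨b, hb⟩ (hba : b < a)
  induction b generalizing a with
  | zero =>
    obtain ⟨a, rfl⟩ : ∃ a', a = a' + 1 := ⟨a - 1, by omega⟩
    exact apply_succ_zero_of_commute_shiftMatrix hB ha
  | succ b ih =>
    obtain ⟨a, rfl⟩ : ∃ a', a = a' + 1 := ⟨a - 1, by omega⟩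
    rw [apply_succ_succ_of_commute_shiftMatrix hB ha hb]
    exact ih a (by omega) (by omega) (by omega)

theorem apply_self_eq_of_commute_shiftMatrix (hB : Commute B (shiftMatrix n R)) (i j : Fin n) :
    B i i = B j j := by
  suffices h : ∀ (a : ℕ) (ha : a < n), B ⟨a, ha⟩ ⟨a, ha⟩ = B ⟨0, by omega⟩ ⟨0, by omega⟩ from
    (h i i.2).trans (h j j.2).symm
  intro a ha
  induction a with
  | zero => rfl
  | succ a ih => rw [apply_succ_succ_of_commute_shiftMatrix hB ha ha, ih]

end shiftMatrix

theorem pow_char_eq_smul_one_of_commute_shiftMatrix {R : Type*} [CommRing R] {p n : ℕ}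
    [Fact p.Prime] [CharP R p] (hnp : n ≤ p) {B : Matrix (Fin n) (Fin n) R}
    (hB : Commute B (shiftMatrix n R)) (i : Fin n) : B ^ p = B i i ^ p • 1 := by
  have : Nonempty (Fin n) := ⟨i⟩
  set M := B - B i i • 1
  have hM : M.IsUpperTriangular := fun j k (hkj : k < j) => by
    simp [M, isUpperTriangular_of_commute_shiftMatrix hB hkj, one_apply_ne hkj.ne']
  have hMp : M ^ p = 0 := by
    have hMn := pow_card_eq_zero_of_isUpperTriangular hM fun j => by
      simp [M, apply_self_eq_of_commute_shiftMatrix hB j i]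
    rw [Fintype.card_fin] at hMn
    rw [← Nat.add_sub_cancel' hnp, pow_add, hMn, zero_mul]
  rwa [sub_pow_char_of_commute _ ((Commute.one_right B).smul_right _), smul_pow, one_pow,
    sub_eq_zero] at hMp

theorem Commute.of_pow_eq_smul {K M : Type*} [Field K] [Ring M] [Algebra K M] {A B : M}
    {k : ℕ} {z : K} (hz : z ≠ 0) (h : B ^ k = z • A) : Commute B A := by
  simpa [h, hz] using Commute.self_pow B k

theorem exists_eq_smul_pow_of_pow_prime_eq_smul_one {K M : Type*} [Field K] [Ring M]
    [Algebra K M] {p k : ℕ} (hp : p.Prime) {A B : M} {c d z : K} (hBp : B ^ p = c • 1)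
    (hAp : A ^ p = d • 1) (hd : d ≠ 0) (hA : ∀ a : K, A ≠ a • 1) (hz : z ≠ 0)
    (hBk : B ^ k = z • A) : ∃ (w : K) (s : ℕ), B = w • A ^ s := by
  have hBpow (t : ℕ) : B ^ (p * t) = c ^ t • 1 := by rw [pow_mul, hBp, smul_pow, one_pow]
  have hpk : ¬ p ∣ k := by
    rintro ⟨t, rfl⟩
    refine hA (z⁻¹ * c ^ t) ?_
    rw [mul_smul, ← hBpow, hBk, inv_smul_smul₀ hz]
  have hc : c ≠ 0 := by
    rintro rfl
    have hk : k ≠ 0 := by rintro rfl; exact hpk (dvd_zero p)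
    have h1 : (z ^ p * d) • (1 : M) = 0 := by
      rw [mul_smul, ← hAp, ← smul_pow, ← hBk, ← pow_mul, mul_comm, hBpow, zero_pow hk, zero_smul]
    rw [smul_eq_zero, or_iff_right (mul_ne_zero (pow_ne_zero p hz) hd)] at h1
    exact hA 0 (by rw [zero_smul, ← mul_one A, h1, mul_zero])
  obtain ⟨s, -, hs⟩ := Nat.exists_mul_mod_eq_one_of_coprime
    (Nat.coprime_comm.mp (hp.coprime_iff_not_dvd.mpr hpk)) hp.one_lt
  have hB : c ^ (k * s / p) • B = z ^ s • A ^ s := calc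
    c ^ (k * s / p) • B = B ^ (p * (k * s / p) + k * s % p) := by
      rw [hs, pow_succ, hBpow, smul_one_mul]
    _ = z ^ s • A ^ s := by rw [Nat.div_add_mod, pow_mul, hBk, smul_pow]
  exact ⟨(c ^ (k * s / p))⁻¹ * z ^ s, s, by rw [mul_smul, ← hB, inv_smul_smul₀ (pow_ne_zero _ hc)]⟩

theorem stmt_18_general (F : Type*) [Field F] (p : ℕ) (hp : p.Prime)
    [CharP F p] (n : ℕ) (hn2 : 2 ≤ n) (hnp : n ≤ p)
    (lam : F) (hlam : lam ≠ 0)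
    (A : Matrix (Fin n) (Fin n) F)
    (hA : A = Matrix.of fun i j : Fin n =>
      if i = j then lam else if (j : ℕ) = (i : ℕ) + 1 then 1 else 0)
    (B : Matrix (Fin n) (Fin n) F) (z : F) (hz : z ≠ 0) (k : ℕ)
    (heq : B ^ k = z • A) :
    ∃ (w : F) (s : ℕ), B = w • A ^ s := by
  have : Fact p.Prime := ⟨hp⟩
  let i₀ : Fin n := ⟨0, by omega⟩
  have hA_eq : A = lam • 1 + shiftMatrix n F := by
    ext i j
    by_cases hij : i = j <;> simp [hA, hij, shiftMatrix, one_apply]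
  have hAS : Commute A (shiftMatrix n F) := by
    rw [hA_eq]
    exact ((Commute.one_left _).smul_left lam).add_left (Commute.refl _)
  have hBS : Commute B (shiftMatrix n F) := by
    have hBA := Commute.of_pow_eq_smul hz heq
    rw [hA_eq] at hBA
    simpa using hBA.sub_right ((Commute.one_right B).smul_right lam)
  have hA_ne : ∀ a : F, A ≠ a • 1 := fun a h => by
    simpa [hA, i₀, Fin.ext_iff] using congr_fun₂ h i₀ ⟨1, hn2⟩
  refine exists_eq_smul_pow_of_pow_prime_eq_smul_one hp
    (pow_char_eq_smul_one_of_commute_shiftMatrix hnp hBS i₀)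
    (pow_char_eq_smul_one_of_commute_shiftMatrix hnp hAS i₀) ?_ hA_ne hz heq
  simp [hA, hlam]

/-- Let `p` be the characteristic of `F_q` and `2 ≤ n ≤ p`. Let `A` be the `n × n` Jordan
block with eigenvalue `λ ≠ 0`. If `B^k = z • A` for some `z ≠ 0` and `k > 0`, then `B` is a
scalar multiple of a power of `A`. -/
theorem stmt_18 (F : Type*) [Field F] [Fintype F] [DecidableEq F] (p : ℕ) (hp : p.Prime)
    [CharP F p] (n : ℕ) (hn2 : 2 ≤ n) (hnp : n ≤ p)
    (lam : F) (hlam : lam ≠ 0)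
    (A : Matrix (Fin n) (Fin n) F)
    (hA : A = Matrix.of fun i j : Fin n =>
      if i = j then lam else if (j : ℕ) = (i : ℕ) + 1 then 1 else 0)
    (B : Matrix (Fin n) (Fin n) F) (z : F) (hz : z ≠ 0) (k : ℕ) (hk : 0 < k)
    (heq : B ^ k = z • A) :
    ∃ (w : F) (s : ℕ), B = w • A ^ s :=
  stmt_18_general F p hp n hn2 hnp lam hlam A hA B z hz k heq
end

section
/- Let q > 2 be a power of 2 with q - 1 prime, and 2 ≤ n < q. Let A in GL_n(F_q) be diagonalizable over F_q with n distinct eigenvalues. If B^k = z·A^t for some z in F_q^* and positive integers k, t with A^t not a scalar multiple of the identity, then B is a scalar multiple of a power of A. -/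
/-!
Write `A = P D P⁻¹` with `D = diagonal d` and `p = q - 1`. Since `F^*` has prime order `p`, the map
`x ↦ x ^ m` on `F^*` is a bijection with inverse a power map unless `p ∣ m`, in which case it is
constant `1`. As `A ^ t` is not scalar, `p ∤ t`, so `D ^ t` still has distinct eigenvalues. The
matrix `C = P⁻¹ B P` commutes with `C ^ k = z • D ^ t`, hence with `D ^ t`, hence is diagonal,
with entries satisfying `e i ^ k = z * d i ^ t`. If `p ∣ k`, then `z * d i ^ t = 1` for all `i`,
making `A ^ t` scalar; so `p ∤ k`, and taking the inverse power `k'` gives `C = z ^ k' • D ^ (t * k')`.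
-/

open Matrix

namespace FiniteField

variable {F : Type*} [Field F] [Fintype F]

theorem pow_eq_one_of_card_sub_one_dvd {x : F} (hx : x ≠ 0) {m : ℕ}
    (hm : Fintype.card F - 1 ∣ m) : x ^ m = 1 := by
  obtain ⟨c, rfl⟩ := hm
  rw [pow_mul, pow_card_sub_one_eq_one x hx, one_pow]

theorem exists_pow_pow_eq_self_of_coprime {m : ℕ} (hm : m.Coprime (Fintype.card F - 1)) :
    ∃ m' : ℕ, ∀ x : F, x ≠ 0 → (x ^ m) ^ m' = x := by
  have hq : Fintype.card F - 1 ≠ 0 := by have := Fintype.one_lt_card (α := F); omega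
  obtain ⟨m', -, hmm'⟩ := Nat.exists_mul_mod_eq_of_coprime 1 hm hq
  refine ⟨m', fun x hx => ?_⟩
  have hx1 := pow_card_sub_one_eq_one x hx
  rw [← pow_mul, pow_eq_pow_mod _ hx1, hmm', ← pow_eq_pow_mod _ hx1, pow_one]

end FiniteField

namespace Matrix

theorem eq_diagonal_of_commute_diagonal {R ι : Type*} [CommRing R] [IsDomain R] [Fintype ι]
    [DecidableEq ι] {a : ι → R} (ha : Function.Injective a) {C : Matrix ι ι R}
    (h : Commute C (diagonal a)) : C = diagonal fun i => C i i := by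
  ext i j
  by_cases hij : i = j
  · subst hij
    simp
  · have hij' := congr_fun₂ h.eq i j
    rw [mul_diagonal, diagonal_mul, mul_comm (a i)] at hij'
    rw [diagonal_apply_ne _ hij]
    exact (mul_eq_mul_left_iff.mp hij').resolve_left fun h => hij (ha h).symm

theorem exists_eq_smul_diagonal_pow_of_pow_eq_smul_diagonal {F ι : Type*} [Field F] [Fintype F]
    [Fintype ι] [DecidableEq ι] (hp : (Fintype.card F - 1).Prime) {a : ι → F}
    (ha : Function.Injective a) (ha0 : ∀ i, a i ≠ 0) (ha_const : ¬∃ w, ∀ i, a i = w)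
    {C : Matrix ι ι F} {z : F} (hz : z ≠ 0) {k : ℕ} (hk : k ≠ 0)
    (hC : C ^ k = z • diagonal a) : ∃ (w : F) (s : ℕ), C = w • diagonal a ^ s := by
  have hcomm : Commute C (diagonal a) := by
    have := Commute.self_pow C k
    rwa [hC, Commute.smul_right_iff₀ hz] at this
  set e : ι → F := fun i => C i i
  have hCe : C = diagonal e := eq_diagonal_of_commute_diagonal ha hcomm
  have he : ∀ i, e i ^ k = z * a i := by
    intro i
    simpa [hCe, diagonal_pow] using congr_fun₂ hC i i
  have he0 : ∀ i, e i ≠ 0 := fun i h0 =>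
    mul_ne_zero hz (ha0 i) (by rw [← he i, h0, zero_pow hk])
  have hk_ndvd : ¬ Fintype.card F - 1 ∣ k := fun hdvd => ha_const ⟨z⁻¹, fun i => by
    refine eq_inv_of_mul_eq_one_left ?_
    rw [mul_comm, ← he i, FiniteField.pow_eq_one_of_card_sub_one_dvd (he0 i) hdvd]⟩
  obtain ⟨k', hk'⟩ := FiniteField.exists_pow_pow_eq_self_of_coprime (F := F)
    ((hp.coprime_iff_not_dvd.mpr hk_ndvd).symm)
  refine ⟨z ^ k', k', ?_⟩
  rw [hCe, diagonal_pow, ← diagonal_smul]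
  congr 1 with i
  rw [← hk' _ (he0 i), he i, mul_pow]
  rfl

end Matrix

theorem stmt_19_general (F : Type*) [Field F] [Fintype F]
    (hqprime : Nat.Prime (Fintype.card F - 1))
    (n : ℕ)
    (A : Matrix (Fin n) (Fin n) F)
    (hdiag : ∃ (P : Matrix (Fin n) (Fin n) F) (d : Fin n → F), IsUnit P ∧
      Function.Injective d ∧ (∀ i, d i ≠ 0) ∧ A = P * Matrix.diagonal d * P⁻¹)
    (B : Matrix (Fin n) (Fin n) F)
    (z : F) (hz : z ≠ 0) (k t : ℕ) (hk : 0 < k)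
    (heq : B ^ k = z • A ^ t)
    (hns : ¬∃ w : F, A ^ t = w • (1 : Matrix (Fin n) (Fin n) F)) :
    ∃ (w : F) (s : ℕ), B = w • A ^ s := by
  obtain ⟨_, d, ⟨u, rfl⟩, hd_inj, hd0, rfl⟩ := hdiag
  simp only [← coe_units_inv, Units.conj_pow] at heq hns ⊢
  have hdt_const : ¬∃ w, ∀ i, d i ^ t = w := fun ⟨w, hw⟩ => hns ⟨w, by
    rw [diagonal_pow, show d ^ t = fun _ => w from funext hw, ← smul_one_eq_diagonal,
      mul_smul_comm, mul_one, smul_mul_assoc, Units.mul_inv]⟩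
  have ht : ¬ Fintype.card F - 1 ∣ t := fun hdvd =>
    hdt_const ⟨1, fun i => FiniteField.pow_eq_one_of_card_sub_one_dvd (hd0 i) hdvd⟩
  obtain ⟨t', ht'⟩ := FiniteField.exists_pow_pow_eq_self_of_coprime (F := F)
    ((hqprime.coprime_iff_not_dvd.mpr ht).symm)
  have hdt_inj : Function.Injective fun i => d i ^ t := fun i j hij => hd_inj <| by
    rw [← ht' _ (hd0 i), ← ht' _ (hd0 j)]
    exact congrArg (· ^ t') hij
  obtain ⟨w, s, hC⟩ := exists_eq_smul_diagonal_pow_of_pow_eq_smul_diagonal hqprime (a := d ^ t)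
    hdt_inj (fun i => pow_ne_zero t (hd0 i)) hdt_const hz hk.ne'
    (C := (↑u⁻¹ : Matrix (Fin n) (Fin n) F) * B * u) (by
      rw [Units.conj_pow', heq, mul_smul_comm, smul_mul_assoc, diagonal_pow]
      simp [mul_assoc])
  refine ⟨w, t * s, ?_⟩
  rw [← diagonal_pow, ← pow_mul] at hC
  rw [← smul_mul_assoc, ← mul_smul_comm, ← hC]
  simp [mul_assoc]

/-- Let `q > 2` be a power of `2` with `q - 1` prime, and `2 ≤ n < q`. Let `A ∈ GL_n(F_q)` be
diagonalizable over `F_q` with `n` distinct (nonzero) eigenvalues. If `B^k = z • A^t` for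
some `z ≠ 0` and `k, t > 0` with `A^t` not a scalar multiple of the identity, then `B` is a
scalar multiple of a power of `A`. -/
theorem stmt_19 (F : Type*) [Field F] [Fintype F] [DecidableEq F]
    (hq2 : 2 < Fintype.card F) (hqpow : ∃ m : ℕ, Fintype.card F = 2 ^ m)
    (hqprime : Nat.Prime (Fintype.card F - 1))
    (n : ℕ) (hn : 2 ≤ n) (hnq : n < Fintype.card F)
    (A : Matrix (Fin n) (Fin n) F)
    (hdiag : ∃ (P : Matrix (Fin n) (Fin n) F) (d : Fin n → F), IsUnit P ∧
      Function.Injective d ∧ (∀ i, d i ≠ 0) ∧ A = P * Matrix.diagonal d * P⁻¹)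
    (B : Matrix (Fin n) (Fin n) F)
    (z : F) (hz : z ≠ 0) (k t : ℕ) (hk : 0 < k) (ht : 0 < t)
    (heq : B ^ k = z • A ^ t)
    (hns : ¬∃ w : F, A ^ t = w • (1 : Matrix (Fin n) (Fin n) F)) :
    ∃ (w : F) (s : ℕ), B = w • A ^ s :=
  stmt_19_general F hqprime n A hdiag B z hz k t hk heq hns
end
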